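/- arXiv:1308.1596 — 7 statements merged into one kernel-verified Lean document; each statement's English description precedes it below -/
import Mathlib

section
/- Let d be a positive integer, let H : ℝ^d → ℝ be continuously differentiable, let S be a skew-symmetric d×d real matrix, and let h be a real number. If y, y' ∈ ℝ^d satisfy y' − y = h · S · ∫₀¹ ∇H(y + ξ(y' − y)) dξ, then H(y') = H(y). (The Average Vector Field scheme exactly preserves the energy integral.) -/
open MeasureTheory Matrix
open scoped RealInnerProductSpace

/-!
Along the segment from `y` to `y'` the fundamental theorem of calculus gives
`H y' - H y = ⟪∫₀¹ ∇H(y + ξ(y' - y)) dξ, y' - y⟫`. The scheme says that `y' - y` is `h S` applied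
to that very average gradient, and the quadratic form of a skew-symmetric `S` vanishes.
-/

section Gradient

variable {E : Type*} [NormedAddCommGroup E] [InnerProductSpace ℝ E] [CompleteSpace E]
  {f : E → ℝ}

theorem ContDiff.continuous_gradient (hf : ContDiff ℝ 1 f) : Continuous (gradient f) :=
  (InnerProductSpace.toDual ℝ E).symm.continuous.comp (hf.continuous_fderiv one_ne_zero)

theorem HasGradientAt.hasDerivAt_comp_add_smul {g x v : E} {t : ℝ}
    (hf : HasGradientAt f g (x + t • v)) :
    HasDerivAt (fun s : ℝ => f (x + s • v)) ⟪g, v⟫ t := by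
  have hline : HasDerivAt (fun s : ℝ => x + s • v) v t := by
    simpa using ((hasDerivAt_id t).smul_const v).const_add x
  have hcomp := hf.hasFDerivAt.comp_hasDerivAt t hline
  rwa [InnerProductSpace.toDual_apply_apply] at hcomp

theorem ContDiff.sub_eq_inner_integral_gradient (hf : ContDiff ℝ 1 f) (x y : E) :
    f y - f x = ⟪∫ ξ in (0 : ℝ)..1, gradient f (x + ξ • (y - x)), y - x⟫ := by
  set v := y - x
  have hcont : Continuous fun ξ : ℝ => gradient f (x + ξ • v) :=
    hf.continuous_gradient.comp (by fun_prop)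
  have hderiv : ∀ ξ ∈ Set.uIcc (0 : ℝ) 1,
      HasDerivAt (fun t : ℝ => f (x + t • v)) ⟪gradient f (x + ξ • v), v⟫ ξ := fun ξ _ =>
    ((hf.differentiable one_ne_zero _).hasGradientAt).hasDerivAt_comp_add_smul
  calc f y - f x = f (x + (1 : ℝ) • v) - f (x + (0 : ℝ) • v) := by simp [v]
    _ = ∫ ξ in (0 : ℝ)..1, ⟪gradient f (x + ξ • v), v⟫ :=
      (intervalIntegral.integral_eq_sub_of_hasDerivAt hderiv
        ((hcont.inner continuous_const).intervalIntegrable 0 1)).symm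
    _ = ⟪∫ ξ in (0 : ℝ)..1, gradient f (x + ξ • v), v⟫ :=
      (innerSLFlip ℝ v).intervalIntegral_comp_comm (hcont.intervalIntegrable 0 1)

end Gradient

theorem Matrix.inner_toEuclideanLin_self_eq_zero {n : Type*} [Fintype n] [DecidableEq n]
    {S : Matrix n n ℝ} (hS : Sᵀ = -S) (v : EuclideanSpace ℝ n) :
    ⟪toEuclideanLin S v, v⟫ = 0 := by
  have hadj := LinearMap.adjoint_inner_left (toEuclideanLin S) v v
  rw [← toEuclideanLin_conjTranspose_eq_adjoint, conjTranspose_eq_transpose_of_trivial, hS,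
    map_neg, LinearMap.neg_apply, inner_neg_left] at hadj
  linarith [real_inner_comm v (toEuclideanLin S v)]

theorem avf_preserves_energy_general
    (d : ℕ)
    (H : EuclideanSpace ℝ (Fin d) → ℝ) (hH : ContDiff ℝ 1 H)
    (S : Matrix (Fin d) (Fin d) ℝ) (hS : Sᵀ = -S)
    (h : ℝ)
    (y y' : EuclideanSpace ℝ (Fin d))
    (scheme : y' - y =
      h • (Matrix.toEuclideanLin S)
        (∫ ξ in (0:ℝ)..1, gradient H (y + ξ • (y' - y)))) :
    H y' = H y := by
  set v := ∫ ξ in (0:ℝ)..1, gradient H (y + ξ • (y' - y))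
  refine sub_eq_zero.mp ?_
  calc H y' - H y = ⟪v, y' - y⟫ := hH.sub_eq_inner_integral_gradient y y'
    _ = h * ⟪toEuclideanLin S v, v⟫ := by rw [scheme, inner_smul_right, real_inner_comm]
    _ = 0 := by rw [inner_toEuclideanLin_self_eq_zero hS, mul_zero]

/-- The Average Vector Field (AVF) scheme
`y' − y = h • S (∫₀¹ ∇H(y + ξ(y' − y)) dξ)`, with `S` skew-symmetric,
exactly preserves the energy integral `H`. -/
theorem avf_preserves_energy
    (d : ℕ) (hd : 0 < d)
    (H : EuclideanSpace ℝ (Fin d) → ℝ) (hH : ContDiff ℝ 1 H)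
    (S : Matrix (Fin d) (Fin d) ℝ) (hS : Sᵀ = -S)
    (h : ℝ)
    (y y' : EuclideanSpace ℝ (Fin d))
    (scheme : y' - y =
      h • (Matrix.toEuclideanLin S)
        (∫ ξ in (0:ℝ)..1, gradient H (y + ξ • (y' - y)))) :
    H y' = H y :=
  avf_preserves_energy_general d H hH S hS h y y' scheme
end

section
/- Let κ ∈ ℝ and let x, y ∈ ℝ³ be nonzero vectors with |x||y| + ⟨x,y⟩ > 0 (so that the segment from x to y does not pass through the origin). Then the AVF discrete gradient of the Coulomb–Kepler potential V(z) = −κ/|z|, whose gradient is ∇V(z) = κ z/|z|³, is given by the closed-form expression ∫₀¹ κ ((1−t)x + t y)/|(1−t)x + t y|³ dt = κ ( x/|x| + y/|y| ) / ( |x||y| + ⟨x,y⟩ ). -/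
/-! With `z t = (1 - t) • x + t • y`, the map `t ↦ t • keplerAVF x (z t)` is a primitive of
`z t / ‖z t‖ ^ 3`: after differentiating, substituting `y - x = t⁻¹ • (z t - x)` leaves a rational
identity in `‖x‖`, `‖z t‖` and `⟪x, z t⟫`. Its denominator `‖x‖ * ‖z t‖ + ⟪x, z t⟫` stays positive
on `[0, 1]`: writing `t • y = z t - (1 - t) • x`, the triangle inequality bounds it below by
`t * (‖x‖ * ‖y‖ + ⟪x, y⟫)`. -/

open MeasureTheory
open scoped RealInnerProductSpace

section

variable {E : Type*} [NormedAddCommGroup E] [InnerProductSpace ℝ E]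

theorem HasDerivAt.norm_of_ne_zero {f : ℝ → E} {f' : E} {t : ℝ} (hf : HasDerivAt f f' t)
    (h0 : f t ≠ 0) : HasDerivAt (fun s => ‖f s‖) (⟪f t, f'⟫ / ‖f t‖) t := by
  have h := hf.norm_sq.sqrt (by positivity)
  simp only [Real.sqrt_sq (norm_nonneg _)] at h
  convert h using 1
  field_simp

theorem hasDerivAt_segment (x y : E) (t : ℝ) :
    HasDerivAt (fun s : ℝ => (1 - s) • x + s • y) (y - x) t := by
  simpa [sub_smul, sub_eq_neg_add] using
    (((hasDerivAt_id t).const_sub 1).smul_const x).fun_add ((hasDerivAt_id t).smul_const y)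

theorem ne_zero_of_norm_mul_norm_add_inner_ne_zero {x w : E} (h : ‖x‖ * ‖w‖ + ⟪x, w⟫ ≠ 0) :
    x ≠ 0 ∧ w ≠ 0 := by
  constructor <;> rintro rfl <;> simp at h

theorem norm_mul_norm_add_inner_segment_pos {x y : E} (hxy : 0 < ‖x‖ * ‖y‖ + ⟪x, y⟫) {t : ℝ}
    (ht : t ∈ Set.Icc (0 : ℝ) 1) :
    0 < ‖x‖ * ‖(1 - t) • x + t • y‖ + ⟪x, (1 - t) • x + t • y⟫ := by
  obtain ⟨ht0, ht1⟩ := ht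
  rcases ht0.eq_or_lt with rfl | ht0
  · have hx := (ne_zero_of_norm_mul_norm_add_inner_ne_zero hxy.ne').1
    simp only [sub_zero, one_smul, zero_smul, add_zero, real_inner_self_eq_norm_sq]
    positivity
  have htri : ‖t • y‖ ≤ ‖(1 - t) • x + t • y‖ + ‖(1 - t) • x‖ := by
    simpa using norm_sub_le ((1 - t) • x + t • y) ((1 - t) • x)
  rw [norm_smul, norm_smul, Real.norm_of_nonneg ht0.le, Real.norm_of_nonneg (by linarith)]
    at htri
  rw [inner_add_right, real_inner_smul_right, real_inner_smul_right, real_inner_self_eq_norm_sq]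
  nlinarith [norm_nonneg x, mul_pos ht0 hxy]

/-- The AVF discrete gradient of `z ↦ -1 / ‖z‖` between `x` and `y`. -/
noncomputable def keplerAVF (x y : E) : E :=
  (‖x‖ * ‖y‖ + ⟪x, y⟫)⁻¹ • (‖x‖⁻¹ • x + ‖y‖⁻¹ • y)

theorem hasDerivAt_smul_keplerAVF {x d : E} {z : ℝ → E} {t : ℝ} (hz : HasDerivAt z d t)
    (ht : t ≠ 0) (htd : t • d = z t - x) (hg : ‖x‖ * ‖z t‖ + ⟪x, z t⟫ ≠ 0) :
    HasDerivAt (fun s => s • keplerAVF x (z s)) ((‖z t‖ ^ 3)⁻¹ • z t) t := by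
  obtain ⟨hx0, hz0⟩ := ne_zero_of_norm_mul_norm_add_inner_ne_zero hg
  have hn := hz.norm_of_ne_zero hz0
  have hg' := (hn.const_mul ‖x‖).fun_add ((hasDerivAt_const t x).inner ℝ hz)
  have hV := ((hn.fun_inv (norm_ne_zero_iff.2 hz0)).fun_smul hz).const_add (‖x‖⁻¹ • x)
  refine ((hasDerivAt_id' t).fun_smul ((hg'.fun_inv hg).fun_smul hV)).congr_deriv ?_
  rw [(eq_inv_smul_iff₀ ht).2 htd]
  clear hg' hV hn hz htd
  generalize z t = w at *
  simp only [inner_smul_right, inner_sub_right, real_inner_self_eq_norm_sq, real_inner_comm x w,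
    inner_zero_left]
  match_scalars <;> field_simp <;> ring

theorem continuousAt_keplerAVF {x w : E} (hg : ‖x‖ * ‖w‖ + ⟪x, w⟫ ≠ 0) :
    ContinuousAt (keplerAVF x) w := by
  have hw := (ne_zero_of_norm_mul_norm_add_inner_ne_zero hg).2
  unfold keplerAVF
  fun_prop (disch := simpa)

theorem integral_segment_smul_inv_norm_pow_three [CompleteSpace E] {x y : E}
    (hxy : 0 < ‖x‖ * ‖y‖ + ⟪x, y⟫) :
    ∫ t in (0 : ℝ)..1, (‖(1 - t) • x + t • y‖ ^ 3)⁻¹ • ((1 - t) • x + t • y) = keplerAVF x y := by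
  have hg t (ht : t ∈ Set.Icc (0 : ℝ) 1) := (norm_mul_norm_add_inner_segment_pos hxy ht).ne'
  have hz0 t (ht : t ∈ Set.Icc (0 : ℝ) 1) :=
    (ne_zero_of_norm_mul_norm_add_inner_ne_zero (hg t ht)).2
  have hz : Continuous fun t : ℝ => (1 - t) • x + t • y := by fun_prop
  have hcont :
      ContinuousOn (fun s : ℝ => s • keplerAVF x ((1 - s) • x + s • y)) (Set.Icc 0 1) := by
    refine fun s hs => (continuousAt_id.smul ?_).continuousWithinAt
    exact (continuousAt_keplerAVF (hg s hs)).comp (f := fun t : ℝ => (1 - t) • x + t • y)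
      hz.continuousAt
  have hint : IntervalIntegrable
      (fun t : ℝ => (‖(1 - t) • x + t • y‖ ^ 3)⁻¹ • ((1 - t) • x + t • y)) volume 0 1 := by
    refine ContinuousOn.intervalIntegrable ?_
    rw [Set.uIcc_of_le zero_le_one]
    exact ((hz.norm.pow 3).continuousOn.inv₀ fun t ht => pow_ne_zero 3
      (norm_ne_zero_iff.2 (hz0 t ht))).smul hz.continuousOn
  rw [intervalIntegral.integral_eq_sub_of_hasDerivAt_of_le zero_le_one hcont
    (fun t ht => hasDerivAt_smul_keplerAVF (hasDerivAt_segment x y t) ht.1.ne' (by module)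
      (hg t (Set.Ioo_subset_Icc_self ht))) hint]
  simp

end

theorem avf_discrete_gradient_kepler_general
    (κ : ℝ) (x y : EuclideanSpace ℝ (Fin 3))
    (hxy : 0 < ‖x‖ * ‖y‖ + ⟪x, y⟫) :
    (∫ t in (0:ℝ)..1,
        (κ / ‖(1 - t) • x + t • y‖ ^ 3) • ((1 - t) • x + t • y)) =
      (κ / (‖x‖ * ‖y‖ + ⟪x, y⟫)) • (‖x‖⁻¹ • x + ‖y‖⁻¹ • y) := by
  simp_rw [div_eq_mul_inv, ← smul_smul, intervalIntegral.integral_smul,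
    integral_segment_smul_inv_norm_pow_three hxy, keplerAVF]

/-- Closed-form expression for the AVF discrete gradient of the
Coulomb–Kepler potential `V(z) = −κ/|z|`, with `∇V(z) = κ z/|z|³`: for nonzero
`x, y ∈ ℝ³` with `|x||y| + ⟨x,y⟩ > 0`,
`∫₀¹ κ((1−t)x + ty)/|(1−t)x + ty|³ dt = κ(x/|x| + y/|y|)/(|x||y| + ⟨x,y⟩)`. -/
theorem avf_discrete_gradient_kepler
    (κ : ℝ) (x y : EuclideanSpace ℝ (Fin 3))
    (hx : x ≠ 0) (hy : y ≠ 0)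
    (hxy : 0 < ‖x‖ * ‖y‖ + ⟪x, y⟫) :
    (∫ t in (0:ℝ)..1,
        (κ / ‖(1 - t) • x + t • y‖ ^ 3) • ((1 - t) • x + t • y)) =
      (κ / (‖x‖ * ‖y‖ + ⟪x, y⟫)) • (‖x‖⁻¹ • x + ‖y‖⁻¹ • y) :=
  avf_discrete_gradient_kepler_general κ x y hxy
end

section
/- Let T, V : ℝ^m → ℝ and let G_T, G_V : ℝ^m × ℝ^m → ℝ^m be discrete gradients of T and V respectively, i.e. ⟨G_T(p,p'), p' − p⟩ = T(p') − T(p) and ⟨G_V(x,x'), x' − x⟩ = V(x') − V(x) for all arguments. Let δ be an invertible m×m real matrix. If x, x', p, p' ∈ ℝ^m satisfy δ⁻¹(x' − x) = G_T(p, p') and (δᵀ)⁻¹(p' − p) = −G_V(x, x'), then T(p') + V(x') = T(p) + V(x). (The modified discrete gradient scheme preserves the energy H = T(p) + V(x) exactly, for any invertible matrix δ.) -/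
open Matrix
open scoped RealInnerProductSpace

/-!
Writing the scheme as `x' - x = δ g` and `p' - p = -δᵀ h` with `g = G_T(p,p')`, `h = G_V(x,x')`,
the discrete gradient property gives `T(p') - T(p) = ⟪g, p' - p⟫ = -⟪g, δᵀ h⟫` and
`V(x') - V(x) = ⟪h, x' - x⟫ = ⟪h, δ g⟫`; these cancel because `δᵀ` is the adjoint of `δ`.
-/

def IsDiscreteGradient {E : Type*} [NormedAddCommGroup E] [InnerProductSpace ℝ E]
    (W : E → ℝ) (G : E → E → E) : Prop :=
  ∀ u u', ⟪G u u', u' - u⟫ = W u' - W u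

theorem IsDiscreteGradient.add_energy_eq
    {E F : Type*} [NormedAddCommGroup E] [InnerProductSpace ℝ E] [FiniteDimensional ℝ E]
    [NormedAddCommGroup F] [InnerProductSpace ℝ F] [FiniteDimensional ℝ F]
    {T : E → ℝ} {V : F → ℝ} {GT : E → E → E} {GV : F → F → F}
    (hGT : IsDiscreteGradient T GT) (hGV : IsDiscreteGradient V GV)
    (A : E →ₗ[ℝ] F) {p p' : E} {x x' : F}
    (hx : x' - x = A (GT p p')) (hp : p' - p = -LinearMap.adjoint A (GV x x')) :
    T p' + V x' = T p + V x := by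
  have hcancel : T p' - T p = -(V x' - V x) := by
    rw [← hGT, ← hGV, hp, inner_neg_right, LinearMap.adjoint_inner_right, ← hx, real_inner_comm]
  linarith

namespace Matrix

variable {n : Type*} [Fintype n] [DecidableEq n]

theorem toEuclideanLin_inv_apply_eq_iff {𝕜 : Type*} [RCLike 𝕜] {A : Matrix n n 𝕜}
    (hA : IsUnit A.det) {v w : EuclideanSpace 𝕜 n} :
    toEuclideanLin A⁻¹ v = w ↔ v = toEuclideanLin A w := by
  constructor
  · rintro rfl
    rw [← LinearMap.comp_apply, ← toLpLin_mul_same, mul_nonsing_inv A hA, toLpLin_one,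
      LinearMap.id_apply]
  · rintro rfl
    rw [← LinearMap.comp_apply, ← toLpLin_mul_same, nonsing_inv_mul A hA, toLpLin_one,
      LinearMap.id_apply]

theorem toEuclideanLin_transpose_eq_adjoint (A : Matrix n n ℝ) :
    toEuclideanLin Aᵀ = LinearMap.adjoint (toEuclideanLin A) :=
  toEuclideanLin_conjTranspose_eq_adjoint A

end Matrix

/-- The modified discrete gradient scheme
`δ⁻¹(x' − x) = G_T(p,p')`, `(δᵀ)⁻¹(p' − p) = −G_V(x,x')` preserves the energy
`H = T(p) + V(x)` exactly, for any invertible matrix `δ` and any discrete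
gradients `G_T`, `G_V` of `T`, `V`. -/
theorem modified_discrete_gradient_preserves_energy
    (m : ℕ)
    (T V : EuclideanSpace ℝ (Fin m) → ℝ)
    (GT GV : EuclideanSpace ℝ (Fin m) → EuclideanSpace ℝ (Fin m) →
      EuclideanSpace ℝ (Fin m))
    (hGT : ∀ p p', ⟪GT p p', p' - p⟫ = T p' - T p)
    (hGV : ∀ x x', ⟪GV x x', x' - x⟫ = V x' - V x)
    (δ : Matrix (Fin m) (Fin m) ℝ) (hδ : IsUnit δ.det)
    (x x' p p' : EuclideanSpace ℝ (Fin m))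
    (scheme1 : Matrix.toEuclideanLin δ⁻¹ (x' - x) = GT p p')
    (scheme2 : Matrix.toEuclideanLin (δᵀ)⁻¹ (p' - p) = -GV x x') :
    T p' + V x' = T p + V x := by
  have hδT : IsUnit δᵀ.det := by rwa [det_transpose]
  have hx := (toEuclideanLin_inv_apply_eq_iff hδ).mp scheme1
  have hp := (toEuclideanLin_inv_apply_eq_iff hδT).mp scheme2
  rw [map_neg, toEuclideanLin_transpose_eq_adjoint] at hp
  exact IsDiscreteGradient.add_energy_eq hGT hGV _ hx hp
end

section
/- Let V : ℝ^m → ℝ be four times continuously differentiable and let G : ℝ^m × ℝ^m → ℝ^m be three times continuously differentiable with G(u,v) = G(v,u) for all u, v and G(z,z) = ∇V(z) for all z. Define B(x) := 3·D₂²G(x,x), the bilinear-map-valued function given by three times the second derivative of y ↦ G(x,y) at y = x. Then for every x ∈ ℝ^m and every u ∈ ℝ^m: 4·D₂³G(x,x)[u,u,u] = 2·(D_x B)(x)[u][u,u] − D⁴V(x)[u,u,u], where (D_x B)(x)[u] is the directional derivative in direction u of the map x ↦ B(x), and D⁴V(x)[u,u,u] denotes the vector with components V,_{γμνσ}(x)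 u^μ u^ν u^σ. (This is the symmetry relation C_{γμνσ} = 2 B_{γμν},_σ − V,_{γμνσ} for the fourth-order Taylor coefficient of a symmetric discrete gradient.) -/
/-!
Let `H(p, q) = G(p, q)` and `T = D³H(x, x)`, a symmetric trilinear form on `E × E` which, `G` being
symmetric, is also invariant under the coordinate swap. With `e = (0, u)`, `f = (u, 0)` and
`d = f + e = (u, u)`, every term of the identity is a value of `T`: `D₂³G(x,x)[u,u,u] = T(e,e,e)`;
`D³(∇V)(x)[u,u,u] = T(d,d,d)` because `∇V = H ∘ diag`; and `(D_x B)(x)[u][u,u] = 3 T(d,e,e)` by the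
chain rule. Expanding in `d = f + e` and using swap invariance, `T(d,d,d) = 2 T(e,e,e) + 6 T(f,e,e)`
and `T(d,e,e) = T(e,e,e) + T(f,e,e)`, so `4 T(e,e,e) = 6 T(d,e,e) - T(d,d,d)`.
-/

namespace MultilinearMap

variable {R M N : Type*} [CommSemiring R] [AddCommMonoid M] [Module R M]
  [AddCommGroup N] [Module R N] (T : MultilinearMap R (fun _ : Fin 3 => M × M) N)

theorem four_smul_apply_inr_of_swap_invariant
    (h01 : ∀ a b c, T ![a, b, c] = T ![b, a, c]) (h12 : ∀ a b c, T ![a, b, c] = T ![a, c, b])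
    (hswap : ∀ a b c : M × M, T ![a.swap, b.swap, c.swap] = T ![a, b, c]) (u : M) :
    4 • T ![(0, u), (0, u), (0, u)] =
      6 • T ![(u, u), (0, u), (0, u)] - T ![(u, u), (u, u), (u, u)] := by
  have add0 (a a' b c) : T ![a + a', b, c] = T ![a, b, c] + T ![a', b, c] :=
    T.cons_add ![b, c] a a'
  have add1 (a b b' c) : T ![a, b + b', c] = T ![a, b, c] + T ![a, b', c] := by
    rw [h01, add0, h01, h01 b']
  have add2 (a b c c') : T ![a, b, c + c'] = T ![a, b, c] + T ![a, b, c'] := by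
    rw [h12, add1, h12, h12 a c']
  set e : M × M := (0, u)
  set f : M × M := (u, 0)
  have hfff : T ![f, f, f] = T ![e, e, e] := hswap e e e
  have hefe : T ![e, f, e] = T ![f, e, e] := h01 e f e
  have heef : T ![e, e, f] = T ![f, e, e] := by rw [h12, hefe]
  have heff : T ![e, f, f] = T ![f, e, e] := hswap f e e
  have hffe : T ![f, f, e] = T ![f, e, e] := by rw [← heef]; exact hswap e e f
  have hfef : T ![f, e, f] = T ![f, e, e] := by rw [← hefe]; exact hswap e f e
  rw [show ((u, u) : M × M) = f + e by simp [e, f]]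
  simp only [add0, add1, add2]
  rw [hfff, hefe, heef, heff, hffe, hfef]
  abel

end MultilinearMap

section ThirdDerivativeSymmetry

variable {𝕜 : Type*} [RCLike 𝕜] {E F : Type*}
  [NormedAddCommGroup E] [NormedSpace 𝕜 E] [NormedAddCommGroup F] [NormedSpace 𝕜 F]
  {g : E → F}

theorem ContDiff.iteratedFDeriv_three_apply_swap₀₁ (hg : ContDiff 𝕜 3 g) (x a b c : E) :
    iteratedFDeriv 𝕜 3 g x ![a, b, c] = iteratedFDeriv 𝕜 3 g x ![b, a, c] := by
  have hsymm : IsSymmSndFDerivAt 𝕜 (fderiv 𝕜 g) x :=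
    (hg.fderiv_right (m := 2) le_rfl).contDiffAt.isSymmSndFDerivAt (by simp)
  have hthree (a b c : E) :
      iteratedFDeriv 𝕜 3 g x ![a, b, c] = fderiv 𝕜 (fderiv 𝕜 (fderiv 𝕜 g)) x a b c := by
    rw [iteratedFDeriv_succ_apply_right, iteratedFDeriv_two_apply]
    rfl
  rw [hthree, hthree]
  exact congr($(hsymm a b) c)

theorem ContDiff.iteratedFDeriv_three_apply_swap₁₂ (hg : ContDiff 𝕜 3 g) (x a b c : E) :
    iteratedFDeriv 𝕜 3 g x ![a, b, c] = iteratedFDeriv 𝕜 3 g x ![a, c, b] := by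
  have hsymm (y : E) : iteratedFDeriv 𝕜 2 g y ![b, c] = iteratedFDeriv 𝕜 2 g y ![c, b] := by
    simpa [iteratedFDeriv_two_apply] using
      (hg.contDiffAt.isSymmSndFDerivAt (by norm_num)) b c
  have hdiff : DifferentiableAt 𝕜 (iteratedFDeriv 𝕜 2 g) x :=
    hg.differentiable_iteratedFDeriv (by norm_num) x
  rw [iteratedFDeriv_succ_apply_left, iteratedFDeriv_succ_apply_left]
  show fderiv 𝕜 (iteratedFDeriv 𝕜 2 g) x a ![b, c] = fderiv 𝕜 (iteratedFDeriv 𝕜 2 g) x a ![c, b]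
  rw [← fderiv_continuousMultilinear_apply_const_apply hdiff,
    ← fderiv_continuousMultilinear_apply_const_apply hdiff, funext hsymm]

end ThirdDerivativeSymmetry

section FunctionsOnSquare

open ContinuousLinearMap ContinuousMultilinearMap

variable {𝕜 : Type*} [NontriviallyNormedField 𝕜] {E F : Type*}
  [NormedAddCommGroup E] [NormedSpace 𝕜 E] [NormedAddCommGroup F] [NormedSpace 𝕜 F]
  {f : E × E → F} {N : WithTop ℕ∞} {n : ℕ}

theorem iteratedFDeriv_comp_prodMk_right (hf : ContDiff 𝕜 N f) (hn : n ≤ N) (z w : E) :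
    iteratedFDeriv 𝕜 n (fun y => f (z, y)) w =
      (iteratedFDeriv 𝕜 n f (z, w)).compContinuousLinearMap fun _ => inr 𝕜 E E := by
  have hshift : (fun y => f (z, y)) = (fun p => f ((z, 0) + p)) ∘ inr 𝕜 E E := by
    ext y; simp
  rw [hshift, (inr 𝕜 E E).iteratedFDeriv_comp_right (f := fun p => f ((z, 0) + p))
    (hf.comp (contDiff_const.add contDiff_id)) w hn, iteratedFDeriv_comp_add_left]
  simp

theorem iteratedFDeriv_comp_diag_apply (hf : ContDiff 𝕜 N f) (hn : n ≤ N) (x : E)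
    (v : Fin n → E) :
    iteratedFDeriv 𝕜 n (fun z => f (z, z)) x v = iteratedFDeriv 𝕜 n f (x, x) fun i => (v i, v i) :=
  congr($((ContinuousLinearMap.id 𝕜 E).prod (.id 𝕜 E) |>.iteratedFDeriv_comp_right hf x hn) v)

theorem iteratedFDeriv_diag_apply_swap (hf : ContDiff 𝕜 N f) (hn : n ≤ N)
    (hsymm : ∀ p q, f (p, q) = f (q, p)) (x : E) (v : Fin n → E × E) :
    iteratedFDeriv 𝕜 n f (x, x) (fun i => (v i).swap) = iteratedFDeriv 𝕜 n f (x, x) v := by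
  have hswap : f ∘ (snd 𝕜 E E).prod (fst 𝕜 E E) = f := by
    ext ⟨p, q⟩; exact (hsymm p q).symm
  conv_rhs => rw [← hswap, ((snd 𝕜 E E).prod (fst 𝕜 E E)).iteratedFDeriv_comp_right hf _ hn]
  rfl

theorem hasFDerivAt_iteratedFDeriv_comp_prodMk_right_diag (hf : ContDiff 𝕜 N f) (hn : n < N)
    (x : E) :
    HasFDerivAt (fun z => iteratedFDeriv 𝕜 n (fun y => f (z, y)) z)
      ((compContinuousLinearMapL (F := F) fun _ => inr 𝕜 E E).comp
        ((fderiv 𝕜 (iteratedFDeriv 𝕜 n f) (x, x)).comp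
          ((ContinuousLinearMap.id 𝕜 E).prod (.id 𝕜 E)))) x := by
  have hP : (fun z => iteratedFDeriv 𝕜 n (fun y => f (z, y)) z) =
      fun z => compContinuousLinearMapL (F := F) (fun _ => inr 𝕜 E E)
        (iteratedFDeriv 𝕜 n f (z, z)) :=
    funext fun z => iteratedFDeriv_comp_prodMk_right hf hn.le z z
  rw [hP]
  exact (compContinuousLinearMapL (F := F) fun _ => inr 𝕜 E E).hasFDerivAt.comp x
    ((hf.differentiable_iteratedFDeriv hn _).hasFDerivAt.comp x
      ((hasFDerivAt_id x).prodMk (hasFDerivAt_id x)))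

theorem fderiv_iteratedFDeriv_comp_prodMk_right_diag_apply (hf : ContDiff 𝕜 N f) (hn : n < N)
    (x u : E) (v : Fin n → E) :
    fderiv 𝕜 (fun z => iteratedFDeriv 𝕜 n (fun y => f (z, y)) z) x u v =
      iteratedFDeriv 𝕜 (n + 1) f (x, x) (Fin.cons (u, u) fun i => (0, v i)) := by
  rw [(hasFDerivAt_iteratedFDeriv_comp_prodMk_right_diag hf hn x).fderiv,
    iteratedFDeriv_succ_apply_left]
  rfl

end FunctionsOnSquare

theorem symmetric_discrete_gradient_fourth_coefficient_general
    (m : ℕ)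
    (V : EuclideanSpace ℝ (Fin m) → ℝ)
    (G : EuclideanSpace ℝ (Fin m) → EuclideanSpace ℝ (Fin m) →
      EuclideanSpace ℝ (Fin m))
    (hG : ContDiff ℝ 3 (fun q : EuclideanSpace ℝ (Fin m) × EuclideanSpace ℝ (Fin m) =>
      G q.1 q.2))
    (hsym : ∀ u v, G u v = G v u)
    (hcons : ∀ z, G z z = gradient V z)
    (B : EuclideanSpace ℝ (Fin m) →
      ContinuousMultilinearMap ℝ (fun _ : Fin 2 => EuclideanSpace ℝ (Fin m))
        (EuclideanSpace ℝ (Fin m)))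
    (hB : ∀ z, B z = (3:ℝ) • iteratedFDeriv ℝ 2 (fun y => G z y) z)
    (x u : EuclideanSpace ℝ (Fin m)) :
    (4:ℝ) • iteratedFDeriv ℝ 3 (fun y => G x y) x ![u, u, u] =
      (2:ℝ) • (fderiv ℝ B x u) ![u, u] -
        iteratedFDeriv ℝ 3 (fun z => gradient V z) x ![u, u, u] := by
  set T := iteratedFDeriv ℝ 3 (fun q : EuclideanSpace ℝ (Fin m) × EuclideanSpace ℝ (Fin m) =>
    G q.1 q.2) (x, x)
  have hpartial : iteratedFDeriv ℝ 3 (fun y => G x y) x ![u, u, u] =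
      T ![(0, u), (0, u), (0, u)] := by
    rw [iteratedFDeriv_comp_prodMk_right hG le_rfl,
      ContinuousMultilinearMap.compContinuousLinearMap_apply]
    congr 1; funext i; fin_cases i <;> rfl
  have hgradient : iteratedFDeriv ℝ 3 (fun z => gradient V z) x ![u, u, u] =
      T ![(u, u), (u, u), (u, u)] := by
    simp_rw [← hcons]
    rw [iteratedFDeriv_comp_diag_apply hG le_rfl]
    congr 1; funext i; fin_cases i <;> rfl
  have hBderiv : fderiv ℝ B x u ![u, u] = (3 : ℝ) • T ![(u, u), (0, u), (0, u)] := by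
    rw [funext hB, fderiv_fun_const_smul
      (hasFDerivAt_iteratedFDeriv_comp_prodMk_right_diag hG (by norm_num) x).differentiableAt,
      smul_apply, smul_apply, fderiv_iteratedFDeriv_comp_prodMk_right_diag_apply hG (by norm_num)]
    congr 2; funext i; fin_cases i <;> rfl
  have hswap (a b c) : T ![a.swap, b.swap, c.swap] = T ![a, b, c] := by
    convert iteratedFDeriv_diag_apply_swap hG le_rfl hsym x ![a, b, c] using 2
    funext i; fin_cases i <;> rfl
  have key := T.toMultilinearMap.four_smul_apply_inr_of_swap_invariant
    (hG.iteratedFDeriv_three_apply_swap₀₁ _) (hG.iteratedFDeriv_three_apply_swap₁₂ _) hswap u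
  rw [hpartial, hgradient, hBderiv]
  linear_combination (norm := module) key

/-- For a symmetric consistent discrete gradient `G` of a `C⁴`
potential `V`, with `B(x) := 3·D₂²G(x,x)`, one has the symmetry relation
`4·D₂³G(x,x)[u,u,u] = 2·(D_x B)(x)[u][u,u] − D⁴V(x)[u,u,u]`
(the relation `C_{γμνσ} = 2 B_{γμν},_σ − V,_{γμνσ}` for the fourth-order Taylor
coefficient of a symmetric discrete gradient). Here `D⁴V(x)[u,u,u]` is realised
as the third derivative of `∇V`. -/
theorem symmetric_discrete_gradient_fourth_coefficient
    (m : ℕ)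
    (V : EuclideanSpace ℝ (Fin m) → ℝ) (hV : ContDiff ℝ 4 V)
    (G : EuclideanSpace ℝ (Fin m) → EuclideanSpace ℝ (Fin m) →
      EuclideanSpace ℝ (Fin m))
    (hG : ContDiff ℝ 3 (fun q : EuclideanSpace ℝ (Fin m) × EuclideanSpace ℝ (Fin m) =>
      G q.1 q.2))
    (hsym : ∀ u v, G u v = G v u)
    (hcons : ∀ z, G z z = gradient V z)
    (B : EuclideanSpace ℝ (Fin m) →
      ContinuousMultilinearMap ℝ (fun _ : Fin 2 => EuclideanSpace ℝ (Fin m))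
        (EuclideanSpace ℝ (Fin m)))
    (hB : ∀ z, B z = (3:ℝ) • iteratedFDeriv ℝ 2 (fun y => G z y) z)
    (x u : EuclideanSpace ℝ (Fin m)) :
    (4:ℝ) • iteratedFDeriv ℝ 3 (fun y => G x y) x ![u, u, u] =
      (2:ℝ) • (fderiv ℝ B x u) ![u, u] -
        iteratedFDeriv ℝ 3 (fun z => gradient V z) x ![u, u, u] :=
  symmetric_discrete_gradient_fourth_coefficient_general m V G hG hsym hcons B hB x u
end

section
/- Let V : ℝ^m → ℝ be smooth and let G : ℝ^m × ℝ^m → ℝ^m be smooth with G(u,v) = G(v,u) and G(z,z) = ∇V(z) for all u, v, z. Fix x, p ∈ ℝ^m and set B := 3·D₂²G(x,x). Let δ : ℝ → (m×m real matrices) be smooth with δ(h) = h·I + (h³/12)·Hess V(x) + h⁵R(h) for some smooth matrix-valued R (the LEX choice), and suppose X, P : ℝ → ℝ^m are smooth and satisfy, for all h in a neighbourhood of 0, the locally exact discrete gradient scheme X(h) = x + δ(h)·(p + P(h))/2, P(h) = p − δ(h)ᵀ·G(x, X(h)). Then X(0) = x, P(0) = p, and the Taylor coefficients are: X'(0) =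 p, P'(0) = −∇V(x); X''(0) = −∇V(x), P''(0) = −Hess V(x) p; X'''(0) = −Hess V(x) p, P'''(0) = Hess V(x) ∇V(x) − B(p,p); and X⁗(0) = Hess V(x) ∇V(x) − 2 B(p,p). -/
open scoped Topology ContDiff

section Helpers
variable {E F : Type*} [NormedAddCommGroup E] [NormedSpace ℝ E]
  [NormedAddCommGroup F] [NormedSpace ℝ F]

lemma iter_deriv_succ' (f : ℝ → E) (n : ℕ) :
    deriv^[n+1] f = deriv (deriv^[n] f) := Function.iterate_succ_apply' _ _ _

lemma hasDerivAt_iter {f : ℝ → E} (hf : ContDiff ℝ ∞ f) (k : ℕ) (h : ℝ) :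
    HasDerivAt (deriv^[k] f) (deriv^[k+1] f h) h := by
  rw [iter_deriv_succ']
  exact (((hf.iterate_deriv k).differentiable (by simp)) h).hasDerivAt

lemma iter_deriv_congr {f g : ℝ → E} (h : f =ᶠ[𝓝 (0:ℝ)] g) (n : ℕ) :
    deriv^[n] f 0 = deriv^[n] g 0 := by
  have H : ∀ n : ℕ, deriv^[n] f =ᶠ[𝓝 (0:ℝ)] deriv^[n] g := by
    intro n
    induction n with
    | zero => exact h
    | succ k ih =>
      rw [iter_deriv_succ', iter_deriv_succ']
      exact ih.deriv
  exact (H n).self_of_nhds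

lemma iter_deriv_zero_fun (n : ℕ) : deriv^[n] (fun _ : ℝ => (0:E)) = fun _ => 0 := by
  induction n with
  | zero => rfl
  | succ k ih =>
    rw [iter_deriv_succ', ih]
    funext h
    exact deriv_const h 0

lemma iter_deriv_const_fun (c : E) (n : ℕ) :
    deriv^[n+1] (fun _ : ℝ => c) = fun _ => 0 := by
  rw [Function.iterate_succ_apply]
  have : deriv (fun _ : ℝ => c) = fun _ : ℝ => (0:E) := funext fun h => deriv_const h c
  rw [this, iter_deriv_zero_fun]

lemma iter_deriv_add {f g : ℝ → E} (hf : ContDiff ℝ ∞ f) (hg : ContDiff ℝ ∞ g) (n : ℕ) :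
    deriv^[n] (fun h => f h + g h) = fun h => deriv^[n] f h + deriv^[n] g h := by
  induction n with
  | zero => rfl
  | succ k ih =>
    rw [iter_deriv_succ', iter_deriv_succ', iter_deriv_succ', ih]
    funext h
    exact deriv_add (((hf.iterate_deriv k).differentiable (by simp)) h)
      (((hg.iterate_deriv k).differentiable (by simp)) h)

lemma iter_deriv_const_smul (c : ℝ) {f : ℝ → E} (hf : ContDiff ℝ ∞ f) (n : ℕ) :
    deriv^[n] (fun h => c • f h) = fun h => c • deriv^[n] f h := by
  induction n with
  | zero => rfl
  | succ k ih =>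
    rw [iter_deriv_succ', iter_deriv_succ', ih]
    funext h
    exact deriv_const_smul c (((hf.iterate_deriv k).differentiable (by simp)) h)

lemma iter_deriv_clm (C : E →L[ℝ] F) {f : ℝ → E} (hf : ContDiff ℝ ∞ f) (n : ℕ) :
    deriv^[n] (fun h => C (f h)) = fun h => C (deriv^[n] f h) := by
  induction n with
  | zero => rfl
  | succ k ih =>
    rw [iter_deriv_succ', iter_deriv_succ', ih]
    funext h
    rw [show deriv (deriv^[k] f) = deriv^[k+1] f from (iter_deriv_succ' f k).symm]
    exact (C.hasFDerivAt.comp_hasDerivAt h (hasDerivAt_iter hf k h)).deriv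

lemma iter_deriv_smul_id {f : ℝ → E} (hf : ContDiff ℝ ∞ f) (n : ℕ) :
    deriv^[n+1] (fun h => h • f h) =
      fun h => ((n:ℝ)+1) • deriv^[n] f h + h • deriv^[n+1] f h := by
  induction n with
  | zero =>
    funext h
    have H : HasDerivAt (fun h : ℝ => h • f h)
        ((id h : ℝ) • deriv f h + (1:ℝ) • f h) h :=
      (hasDerivAt_id h).smul ((hf.differentiable (by simp) h).hasDerivAt)
    refine H.deriv.trans ?_
    show _ = ((Nat.cast 0:ℝ)+1) • deriv^[0] f h + h • deriv^[0+1] f h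
    simp only [id_eq, Function.iterate_one, Function.iterate_zero, id, Nat.cast_zero, zero_add]
    module
  | succ k ih =>
    rw [iter_deriv_succ' (fun h : ℝ => h • f h) (k+1), ih]
    funext h
    have hd1 := hasDerivAt_iter hf k h
    have hd2 := hasDerivAt_iter hf (k+1) h
    have H : HasDerivAt (fun h => ((k:ℝ)+1) • deriv^[k] f h + h • deriv^[k+1] f h)
        (((k:ℝ)+1) • deriv^[k+1] f h + ((id h : ℝ) • deriv^[k+2] f h + (1:ℝ) • deriv^[k+1] f h)) h :=
      (hd1.const_smul _).add ((hasDerivAt_id h).smul hd2)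
    refine H.deriv.trans ?_
    simp only [id_eq]
    push_cast
    module

lemma iter_deriv_smul_id_at0 {f : ℝ → E} (hf : ContDiff ℝ ∞ f) (n : ℕ) :
    deriv^[n+1] (fun h => h • f h) 0 = ((n:ℝ)+1) • deriv^[n] f 0 := by
  rw [iter_deriv_smul_id hf n]
  simp

end Helpers

section Pow
variable {E : Type*} [NormedAddCommGroup E] [NormedSpace ℝ E] {f : ℝ → E}

lemma cube_smul_eq (f : ℝ → E) :
    (fun h : ℝ => h^3 • f h) = fun h => h • (h • (h • f h)) :=
  funext fun h => by rw [smul_smul, smul_smul]; congr 1; ring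

lemma quint_smul_eq (f : ℝ → E) :
    (fun h : ℝ => h^5 • f h) = fun h => h • (h • (h • (h • (h • f h)))) :=
  funext fun h => by
    rw [smul_smul, smul_smul, smul_smul, smul_smul]; congr 1; ring

lemma iter_deriv_cube₁ (hf : ContDiff ℝ ∞ f) :
    deriv^[1] (fun h : ℝ => h^3 • f h) 0 = 0 := by
  have h1 : ContDiff ℝ ∞ (fun h : ℝ => h • f h) := contDiff_id.smul hf
  have h2 : ContDiff ℝ ∞ (fun h : ℝ => h • (h • f h)) := contDiff_id.smul h1
  rw [cube_smul_eq, iter_deriv_smul_id_at0 h2 0]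
  simp

lemma iter_deriv_cube₂ (hf : ContDiff ℝ ∞ f) :
    deriv^[2] (fun h : ℝ => h^3 • f h) 0 = 0 := by
  have h1 : ContDiff ℝ ∞ (fun h : ℝ => h • f h) := contDiff_id.smul hf
  have h2 : ContDiff ℝ ∞ (fun h : ℝ => h • (h • f h)) := contDiff_id.smul h1
  rw [cube_smul_eq, iter_deriv_smul_id_at0 h2 1, iter_deriv_smul_id_at0 h1 0]
  simp

lemma iter_deriv_cube₃ (hf : ContDiff ℝ ∞ f) :
    deriv^[3] (fun h : ℝ => h^3 • f h) 0 = (6:ℝ) • f 0 := by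
  have h1 : ContDiff ℝ ∞ (fun h : ℝ => h • f h) := contDiff_id.smul hf
  have h2 : ContDiff ℝ ∞ (fun h : ℝ => h • (h • f h)) := contDiff_id.smul h1
  rw [cube_smul_eq, iter_deriv_smul_id_at0 h2 2, iter_deriv_smul_id_at0 h1 1,
    iter_deriv_smul_id_at0 hf 0]
  rw [smul_smul, smul_smul]
  norm_num

lemma iter_deriv_cube₄ (hf : ContDiff ℝ ∞ f) :
    deriv^[4] (fun h : ℝ => h^3 • f h) 0 = (24:ℝ) • deriv f 0 := by
  have h1 : ContDiff ℝ ∞ (fun h : ℝ => h • f h) := contDiff_id.smul hf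
  have h2 : ContDiff ℝ ∞ (fun h : ℝ => h • (h • f h)) := contDiff_id.smul h1
  rw [cube_smul_eq, iter_deriv_smul_id_at0 h2 3, iter_deriv_smul_id_at0 h1 2,
    iter_deriv_smul_id_at0 hf 1]
  rw [smul_smul, smul_smul]
  norm_num [Function.iterate_one]

lemma iter_deriv_quint (hf : ContDiff ℝ ∞ f) (n : ℕ) (hn : n ≤ 3) :
    deriv^[n+1] (fun h : ℝ => h^5 • f h) 0 = 0 := by
  have h1 : ContDiff ℝ ∞ (fun h : ℝ => h • f h) := contDiff_id.smul hf
  have h2 : ContDiff ℝ ∞ (fun h : ℝ => h • (h • f h)) := contDiff_id.smul h1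
  have h3 : ContDiff ℝ ∞ (fun h : ℝ => h • (h • (h • f h))) := contDiff_id.smul h2
  have h4 : ContDiff ℝ ∞ (fun h : ℝ => h • (h • (h • (h • f h)))) := contDiff_id.smul h3
  rw [quint_smul_eq]
  interval_cases n
  · rw [iter_deriv_smul_id_at0 h4 0]; simp
  · rw [iter_deriv_smul_id_at0 h4 1, iter_deriv_smul_id_at0 h3 0]; simp
  · rw [iter_deriv_smul_id_at0 h4 2, iter_deriv_smul_id_at0 h3 1,
      iter_deriv_smul_id_at0 h2 0]; simp
  · rw [iter_deriv_smul_id_at0 h4 3, iter_deriv_smul_id_at0 h3 2,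
      iter_deriv_smul_id_at0 h2 1, iter_deriv_smul_id_at0 h1 0]; simp

end Pow

section SchemeExpand
variable {E : Type*} [NormedAddCommGroup E] [NormedSpace ℝ E]

lemma scheme_expand (c : E) (a : ℝ) (f g w : ℝ → E) (hf : ContDiff ℝ ∞ f)
    (hg : ContDiff ℝ ∞ g) (hw : ContDiff ℝ ∞ w) (n : ℕ) (hn : n ≤ 3) :
    deriv^[n+1] (fun h : ℝ =>
        c + a • (h • f h + ((1/12:ℝ) • (h^3 • g h) + h^5 • w h))) 0
      = a • (((n:ℝ)+1) • deriv^[n] f 0 +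
        (1/12:ℝ) • deriv^[n+1] (fun h : ℝ => h^3 • g h) 0) := by
  have h1 : ContDiff ℝ ∞ (fun h : ℝ => h • f h) := contDiff_id.smul hf
  have h2 : ContDiff ℝ ∞ (fun h : ℝ => h^3 • g h) := (contDiff_id.pow 3).smul hg
  have h3 : ContDiff ℝ ∞ (fun h : ℝ => h^5 • w h) := (contDiff_id.pow 5).smul hw
  have h23 : ContDiff ℝ ∞ (fun h : ℝ => (1/12:ℝ) • (h^3 • g h) + h^5 • w h) :=
    (h2.const_smul _).add h3
  have hall : ContDiff ℝ ∞
      (fun h : ℝ => h • f h + ((1/12:ℝ) • (h^3 • g h) + h^5 • w h)) := h1.add h23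
  rw [iter_deriv_add (f := fun _ => c)
    (g := fun h : ℝ => a • (h • f h + ((1/12:ℝ) • (h^3 • g h) + h^5 • w h)))
    contDiff_const (hall.const_smul a) (n+1)]
  rw [iter_deriv_const_fun c n]
  rw [iter_deriv_const_smul a hall (n+1)]
  rw [iter_deriv_add h1 h23 (n+1)]
  rw [iter_deriv_add (h2.const_smul _) h3 (n+1)]
  rw [iter_deriv_const_smul (1/12:ℝ) h2 (n+1)]
  beta_reduce
  rw [iter_deriv_smul_id_at0 hf n, iter_deriv_quint hw n hn]
  simp

lemma scheme_expandX (c : E) (f g w : ℝ → E) (hf : ContDiff ℝ ∞ f)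
    (hg : ContDiff ℝ ∞ g) (hw : ContDiff ℝ ∞ w) (n : ℕ) (hn : n ≤ 3) :
    deriv^[n+1] (fun h : ℝ =>
        c + (h • f h + ((h^3/12) • g h + h^5 • w h))) 0
      = ((n:ℝ)+1) • deriv^[n] f 0 +
        (1/12:ℝ) • deriv^[n+1] (fun h : ℝ => h^3 • g h) 0 := by
  have e : (fun h : ℝ => c + (h • f h + ((h^3/12) • g h + h^5 • w h)))
      = fun h : ℝ => c + (1:ℝ) • (h • f h + ((1/12:ℝ) • (h^3 • g h) + h^5 • w h)) := by
    funext h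
    module
  rw [e, scheme_expand c 1 f g w hf hg hw n hn, one_smul]

lemma scheme_expandP (c : E) (f g w : ℝ → E) (hf : ContDiff ℝ ∞ f)
    (hg : ContDiff ℝ ∞ g) (hw : ContDiff ℝ ∞ w) (n : ℕ) (hn : n ≤ 3) :
    deriv^[n+1] (fun h : ℝ =>
        c - (h • f h + ((h^3/12) • g h + h^5 • w h))) 0
      = -(((n:ℝ)+1) • deriv^[n] f 0 +
        (1/12:ℝ) • deriv^[n+1] (fun h : ℝ => h^3 • g h) 0) := by
  have e : (fun h : ℝ => c - (h • f h + ((h^3/12) • g h + h^5 • w h)))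
      = fun h : ℝ => c + (-1:ℝ) • (h • f h + ((1/12:ℝ) • (h^3 • g h) + h^5 • w h)) := by
    funext h
    module
  rw [e, scheme_expand c (-1) f g w hf hg hw n hn, neg_one_smul]

end SchemeExpand

section Adjoint
open scoped RealInnerProductSpace
variable {E : Type*} [NormedAddCommGroup E] [InnerProductSpace ℝ E] [CompleteSpace E]

lemma adjoint_fderiv_grad (V : E → ℝ) (hV : ContDiff ℝ ∞ V) (W : E → E)
    (hW : Differentiable ℝ W) (hWgrad : ∀ z, W z = gradient V z) (x : E) :
    ContinuousLinearMap.adjoint (fderiv ℝ W x) = fderiv ℝ W x := by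
  have hV1 : ContDiff ℝ ∞ (fderiv ℝ V) := hV.fderiv_right (by simp)
  have hd2 : DifferentiableAt ℝ (fderiv ℝ V) x := hV1.differentiable (by simp) x
  have key : ∀ u w : E, ⟪fderiv ℝ W x u, w⟫ = fderiv ℝ (fderiv ℝ V) x u w := by
    intro u w
    have e1 : fderiv ℝ (fun z => ⟪W z, w⟫) x u = ⟪fderiv ℝ W x u, w⟫ := by
      rw [fderiv_inner_apply (𝕜 := ℝ) (hW x) (differentiableAt_const w) u]
      simp
    have e2 : (fun z => ⟪W z, w⟫) = fun z => fderiv ℝ V z w := by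
      funext z
      rw [hWgrad z]
      exact InnerProductSpace.toDual_symm_apply
    have e3 : fderiv ℝ (fun z => fderiv ℝ V z w) x u = fderiv ℝ (fderiv ℝ V) x u w := by
      rw [fderiv_clm_apply (c := fderiv ℝ V) (u := fun _ => w) hd2 (differentiableAt_const w)]
      simp
    rw [← e1, e2, e3]
  have symm2 : ∀ u w : E, fderiv ℝ (fderiv ℝ V) x u w = fderiv ℝ (fderiv ℝ V) x w u :=
    fun u w => second_derivative_symmetric
      (fun y => (hV.differentiable (by simp) y).hasFDerivAt) hd2.hasFDerivAt u w
  refine ((ContinuousLinearMap.eq_adjoint_iff _ _).mpr ?_).symm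
  intro u w
  rw [key u w, real_inner_comm ((fderiv ℝ W x) w) u, key w u]
  exact symm2 u w

lemma contDiff_adjoint_comp {F : Type*} [NormedAddCommGroup F] [NormedSpace ℝ F]
    (R : F → (E →L[ℝ] E)) (hR : ContDiff ℝ ∞ R) :
    ContDiff ℝ ∞ (fun h => ContinuousLinearMap.adjoint (R h)) := by
  have hb : IsBoundedLinearMap ℝ
      (fun T : E →L[ℝ] E => ContinuousLinearMap.adjoint T) := by
    refine ⟨⟨fun T U => map_add _ T U, fun c T => ?_⟩, 1, one_pos, fun T => ?_⟩
    · rw [map_smulₛₗ]; simp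
    · rw [one_mul]
      exact le_of_eq (LinearIsometryEquiv.norm_map _ T)
  exact hb.contDiff.comp hR

end Adjoint

open scoped Topology

set_option maxHeartbeats 1000000 in
/-- Taylor coefficients up to order 4 of the LEX (locally
exact) modification of a symmetric discrete gradient scheme
`X(h) = x + δ(h)(p + P(h))/2`, `P(h) = p − δ(h)ᵀ G(x, X(h))`,
with `δ(h) = h·I + (h³/12)·Hess V(x) + h⁵R(h)`, where `B := 3·D₂²G(x,x)`. -/
theorem lex_scheme_taylor_coefficients
    (m : ℕ)
    (V : EuclideanSpace ℝ (Fin m) → ℝ) (hV : ContDiff ℝ (⊤ : ℕ∞) V)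
    (G : EuclideanSpace ℝ (Fin m) → EuclideanSpace ℝ (Fin m) →
      EuclideanSpace ℝ (Fin m))
    (hG : ContDiff ℝ (⊤ : ℕ∞) (fun q : EuclideanSpace ℝ (Fin m) × EuclideanSpace ℝ (Fin m) =>
      G q.1 q.2))
    (hsym : ∀ u v, G u v = G v u)
    (hcons : ∀ z, G z z = gradient V z)
    (x p : EuclideanSpace ℝ (Fin m))
    (δ R : ℝ → (EuclideanSpace ℝ (Fin m) →L[ℝ] EuclideanSpace ℝ (Fin m)))
    (hR : ContDiff ℝ (⊤ : ℕ∞) R)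
    (hδ : ∀ h : ℝ, δ h = h • ContinuousLinearMap.id ℝ (EuclideanSpace ℝ (Fin m)) +
      (h ^ 3 / 12) • fderiv ℝ (fun z => gradient V z) x + h ^ 5 • R h)
    (X P : ℝ → EuclideanSpace ℝ (Fin m))
    (hX : ContDiff ℝ (⊤ : ℕ∞) X) (hP : ContDiff ℝ (⊤ : ℕ∞) P)
    (hscheme : ∀ᶠ h in 𝓝 (0:ℝ),
      X h = x + δ h ((2:ℝ)⁻¹ • (p + P h)) ∧
      P h = p - ContinuousLinearMap.adjoint (δ h) (G x (X h))) :
    X 0 = x ∧ P 0 = p ∧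
    deriv X 0 = p ∧ deriv P 0 = -gradient V x ∧
    deriv^[2] X 0 = -gradient V x ∧
    deriv^[2] P 0 = -(fderiv ℝ (fun z => gradient V z) x (p)) ∧
    deriv^[3] X 0 = -(fderiv ℝ (fun z => gradient V z) x (p)) ∧
    deriv^[3] P 0 =
      fderiv ℝ (fun z => gradient V z) x (gradient V x) -
        (3:ℝ) • iteratedFDeriv ℝ 2 (fun y => G x y) x ![p, p] ∧
    deriv^[4] X 0 =
      fderiv ℝ (fun z => gradient V z) x (gradient V x) -
        (2:ℝ) • ((3:ℝ) • iteratedFDeriv ℝ 2 (fun y => G x y) x ![p, p]) := by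
  have hV' : ContDiff ℝ ∞ V := hV.of_le (by simp)
  have hG' : ContDiff ℝ ∞
      (fun q : EuclideanSpace ℝ (Fin m) × EuclideanSpace ℝ (Fin m) => G q.1 q.2) :=
    hG.of_le (by simp)
  have hR' : ContDiff ℝ ∞ R := hR.of_le (by simp)
  have hX' : ContDiff ℝ ∞ X := hX.of_le (by simp)
  have hP' : ContDiff ℝ ∞ P := hP.of_le (by simp)
  have hGx : ContDiff ℝ ∞ (fun y => G x y) := hG'.comp (contDiff_const.prodMk contDiff_id)
  have hdiagC : ContDiff ℝ ∞ (fun z => G z z) := hG'.comp (contDiff_id.prodMk contDiff_id)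
  have hgrad_eq : (fun z => gradient V z) = fun z => G z z := funext fun z => (hcons z).symm
  -- step 0
  obtain ⟨hX0', hP0'⟩ := hscheme.self_of_nhds
  have hδ0 : δ 0 = 0 := by
    rw [hδ 0]
    ext y i
    norm_num
  have hX0 : X 0 = x := by rw [hX0', hδ0]; simp
  have hP0 : P 0 = p := by rw [hP0', hδ0]; simp
  set v := gradient V x with hvdef
  set A := fderiv ℝ (fun z => gradient V z) x with hAdef
  set S := fderiv ℝ (fun y => G x y) x with hSdef
  -- A = S + S
  have hA2S : ∀ y, A y = S y + S y := by
    intro y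
    have hL : HasFDerivAt (fun q : EuclideanSpace ℝ (Fin m) × EuclideanSpace ℝ (Fin m) => G q.1 q.2)
        (fderiv ℝ (fun q : EuclideanSpace ℝ (Fin m) × EuclideanSpace ℝ (Fin m) => G q.1 q.2) (x, x)) (x, x) :=
      (hG'.differentiable (by simp) (x,x)).hasFDerivAt
    set L := fderiv ℝ (fun q : EuclideanSpace ℝ (Fin m) × EuclideanSpace ℝ (Fin m) => G q.1 q.2) (x, x) with hLdef
    have hdiag0 := HasFDerivAt.comp (f := fun z : EuclideanSpace ℝ (Fin m) => (z, z)) x hL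
      ((hasFDerivAt_id x).prodMk (hasFDerivAt_id x))
    have hdiag : HasFDerivAt (fun z => G z z)
        (L.comp ((ContinuousLinearMap.id ℝ _).prod (ContinuousLinearMap.id ℝ _))) x := hdiag0
    have hSr0 := hL.comp x (hasFDerivAt_prodMk_right x x)
    have hSr : HasFDerivAt (fun y => G x y)
        (L.comp (ContinuousLinearMap.inr ℝ _ _)) x := hSr0
    have hSl : HasFDerivAt (fun y => G x y) (L.comp (ContinuousLinearMap.inl ℝ _ _)) x := by
      have h00 := HasFDerivAt.comp (f := fun z : EuclideanSpace ℝ (Fin m) => (z, x)) x hL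
        (hasFDerivAt_prodMk_left x x)
      have h0 : HasFDerivAt (fun z => G z x) (L.comp (ContinuousLinearMap.inl ℝ _ _)) x := h00
      have he : (fun z => G z x) = (fun z => G x z) := funext fun z => hsym z x
      rwa [he] at h0
    have e1 : A = L.comp ((ContinuousLinearMap.id ℝ _).prod (ContinuousLinearMap.id ℝ _)) := by
      rw [hAdef, hgrad_eq]; exact hdiag.fderiv
    have e2 : S = L.comp (ContinuousLinearMap.inr ℝ _ _) := by rw [hSdef]; exact hSr.fderiv
    have e3 : S = L.comp (ContinuousLinearMap.inl ℝ _ _) := by rw [hSdef]; exact hSl.fderiv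
    have key : L (y, y) = L (y, 0) + L (0, y) := by
      rw [← map_add]
      congr 1
      simp [Prod.mk_add_mk]
    have k1 : A y = L (y, y) := by rw [e1]; rfl
    have k2 : S y + S y = L (y, 0) + L (0, y) := by
      nth_rewrite 1 [e3]
      rw [e2]
      rfl
    rw [k1, k2, key]
  -- adjoint A = A
  have hAsa : ContinuousLinearMap.adjoint A = A := by
    have hdiff : Differentiable ℝ (fun z => gradient V z) := by
      rw [hgrad_eq]; exact hdiagC.differentiable (by simp)
    rw [hAdef]
    exact adjoint_fderiv_grad V hV' _ hdiff (fun z => rfl) x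
  -- smoothness of ingredients
  have hq : ContDiff ℝ ∞ (fun h : ℝ => (2:ℝ)⁻¹ • (p + P h)) :=
    (contDiff_const.add hP').const_smul _
  have hYc : ContDiff ℝ ∞ (fun h : ℝ => G x (X h)) := hGx.comp hX'
  have hu : ContDiff ℝ ∞ (fun h : ℝ => A ((2:ℝ)⁻¹ • (p + P h))) := A.contDiff.comp hq
  have hw : ContDiff ℝ ∞ (fun h : ℝ => (R h) ((2:ℝ)⁻¹ • (p + P h))) := hR'.clm_apply hq
  have huY : ContDiff ℝ ∞ (fun h : ℝ => A (G x (X h))) := A.contDiff.comp hYc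
  have hadjC := contDiff_adjoint_comp R hR'
  have hwY : ContDiff ℝ ∞
      (fun h : ℝ => (ContinuousLinearMap.adjoint (R h)) (G x (X h))) := hadjC.clm_apply hYc
  have hsm : ∀ (c : ℝ) (T : EuclideanSpace ℝ (Fin m) →L[ℝ] EuclideanSpace ℝ (Fin m)),
      ContinuousLinearMap.adjoint (c • T) = c • ContinuousLinearMap.adjoint T := by
    intro c T
    rw [map_smulₛₗ]
    simp
  -- eventual identities
  have hXev : X =ᶠ[𝓝 (0:ℝ)] fun h =>
      x + (h • ((2:ℝ)⁻¹ • (p + P h)) +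
        ((h^3/12) • A ((2:ℝ)⁻¹ • (p + P h)) +
          h^5 • (R h) ((2:ℝ)⁻¹ • (p + P h)))) := by
    filter_upwards [hscheme] with h hh
    rw [hh.1, hδ h]
    simp only [ContinuousLinearMap.add_apply, ContinuousLinearMap.smul_apply,
      ContinuousLinearMap.id_apply]
    rw [add_assoc]
  have hPev : P =ᶠ[𝓝 (0:ℝ)] fun h =>
      p - (h • (G x (X h)) +
        ((h^3/12) • A (G x (X h)) +
          h^5 • (ContinuousLinearMap.adjoint (R h)) (G x (X h)))) := by
    filter_upwards [hscheme] with h hh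
    rw [hh.2, hδ h, map_add, map_add, hsm, hsm, hsm, ContinuousLinearMap.adjoint_id, hAsa]
    simp only [ContinuousLinearMap.add_apply, ContinuousLinearMap.smul_apply,
      ContinuousLinearMap.id_apply]
    rw [add_assoc]
  -- expansions
  have hXit : ∀ n : ℕ, n ≤ 3 → deriv^[n+1] X 0 =
      ((n:ℝ)+1) • deriv^[n] (fun h : ℝ => (2:ℝ)⁻¹ • (p + P h)) 0 +
        (1/12:ℝ) • deriv^[n+1] (fun h : ℝ => h^3 • A ((2:ℝ)⁻¹ • (p + P h))) 0 :=
    fun n hn => (iter_deriv_congr hXev (n+1)).trans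
      (scheme_expandX x _ _ _ hq hu hw n hn)
  have hPit : ∀ n : ℕ, n ≤ 3 → deriv^[n+1] P 0 =
      -(((n:ℝ)+1) • deriv^[n] (fun h : ℝ => G x (X h)) 0 +
        (1/12:ℝ) • deriv^[n+1] (fun h : ℝ => h^3 • A (G x (X h))) 0) :=
    fun n hn => (iter_deriv_congr hPev (n+1)).trans
      (scheme_expandP p _ _ _ hYc huY hwY n hn)
  -- q facts
  have hq0 : (2:ℝ)⁻¹ • (p + P 0) = p := by
    rw [hP0, ← two_smul ℝ p, smul_smul]
    norm_num
  have hqd : ∀ n : ℕ, deriv^[n+1] (fun h : ℝ => (2:ℝ)⁻¹ • (p + P h)) 0 =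
      (2:ℝ)⁻¹ • deriv^[n+1] P 0 := by
    intro n
    rw [iter_deriv_const_smul ((2:ℝ)⁻¹) (contDiff_const.add hP') (n+1)]
    beta_reduce
    rw [iter_deriv_add (f := fun _ => p) (g := P) contDiff_const hP' (n+1)]
    beta_reduce
    rw [iter_deriv_const_fun p n]
    simp
  have hqd1 : deriv^[1] (fun h : ℝ => (2:ℝ)⁻¹ • (p + P h)) 0 =
      (2:ℝ)⁻¹ • deriv^[1] P 0 := hqd 0
  have hqd2 : deriv^[2] (fun h : ℝ => (2:ℝ)⁻¹ • (p + P h)) 0 =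
      (2:ℝ)⁻¹ • deriv^[2] P 0 := hqd 1
  have hqd3 : deriv^[3] (fun h : ℝ => (2:ℝ)⁻¹ • (p + P h)) 0 =
      (2:ℝ)⁻¹ • deriv^[3] P 0 := hqd 2
  have hY0 : G x (X 0) = v := by rw [hX0, hcons x]
  -- first derivatives
  have dX1 : deriv X 0 = p := by
    have h1 : deriv^[1] X 0 =
        (((0:ℕ):ℝ)+1) • deriv^[0] (fun h : ℝ => (2:ℝ)⁻¹ • (p + P h)) 0 +
          (1/12:ℝ) • deriv^[1] (fun h : ℝ => h^3 • A ((2:ℝ)⁻¹ • (p + P h))) 0 :=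
      hXit 0 (by norm_num)
    rw [iter_deriv_cube₁ hu] at h1
    simp only [Function.iterate_one, Function.iterate_zero, id_eq] at h1
    rw [hq0] at h1
    simpa using h1
  have dP1 : deriv P 0 = -v := by
    have h1 : deriv^[1] P 0 =
        -((((0:ℕ):ℝ)+1) • deriv^[0] (fun h : ℝ => G x (X h)) 0 +
          (1/12:ℝ) • deriv^[1] (fun h : ℝ => h^3 • A (G x (X h))) 0) :=
      hPit 0 (by norm_num)
    rw [iter_deriv_cube₁ huY] at h1
    simp only [Function.iterate_one, Function.iterate_zero, id_eq] at h1
    rw [hY0] at h1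
    simpa using h1
  have dX2 : deriv^[2] X 0 = -v := by
    have h1 : deriv^[2] X 0 =
        (((1:ℕ):ℝ)+1) • deriv^[1] (fun h : ℝ => (2:ℝ)⁻¹ • (p + P h)) 0 +
          (1/12:ℝ) • deriv^[2] (fun h : ℝ => h^3 • A ((2:ℝ)⁻¹ • (p + P h))) 0 :=
      hXit 1 (by norm_num)
    rw [iter_deriv_cube₂ hu, hqd1, Function.iterate_one, dP1] at h1
    rw [h1]
    push_cast
    module
  -- Y first derivative
  have hXd0 : HasDerivAt X (deriv X 0) 0 := (hX'.differentiable (by simp) 0).hasDerivAt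
  have dY1 : deriv (fun h : ℝ => G x (X h)) 0 = S p := by
    have h1 : HasFDerivAt (fun y => G x y) S (X 0) := by
      rw [hX0, hSdef]
      exact (hGx.differentiable (by simp) x).hasFDerivAt
    have h2 : deriv (fun h : ℝ => G x (X h)) 0 = S (deriv X 0) :=
      (h1.comp_hasDerivAt 0 hXd0).deriv
    rw [h2, dX1]
  have dP2 : deriv^[2] P 0 = -(S p + S p) := by
    have h1 : deriv^[2] P 0 =
        -((((1:ℕ):ℝ)+1) • deriv^[1] (fun h : ℝ => G x (X h)) 0 +
          (1/12:ℝ) • deriv^[2] (fun h : ℝ => h^3 • A (G x (X h))) 0) :=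
      hPit 1 (by norm_num)
    rw [iter_deriv_cube₂ huY, Function.iterate_one, dY1] at h1
    rw [h1]
    push_cast
    module
  have dX3 : deriv^[3] X 0 = -(S p + S p) := by
    have h1 : deriv^[3] X 0 =
        (((2:ℕ):ℝ)+1) • deriv^[2] (fun h : ℝ => (2:ℝ)⁻¹ • (p + P h)) 0 +
          (1/12:ℝ) • deriv^[3] (fun h : ℝ => h^3 • A ((2:ℝ)⁻¹ • (p + P h))) 0 :=
      hXit 2 (by norm_num)
    rw [iter_deriv_cube₃ hu, hq0, hqd2, dP2, hA2S p] at h1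
    rw [h1]
    push_cast
    module
  -- second derivative of Y
  have derivY_fun : deriv (fun h : ℝ => G x (X h)) =
      fun h => (fderiv ℝ (fun y => G x y) (X h)) (deriv X h) := by
    funext h
    exact (((hGx.differentiable (by simp) (X h)).hasFDerivAt).comp_hasDerivAt h
      ((hX'.differentiable (by simp) h).hasDerivAt)).deriv
  have hGx1 : ContDiff ℝ ∞ (fderiv ℝ (fun y => G x y)) := hGx.fderiv_right (by simp)
  set Q2 := fderiv ℝ (fderiv ℝ (fun y => G x y)) x with hQ2def
  have dY2 : deriv^[2] (fun h : ℝ => G x (X h)) 0 = Q2 p p + S (deriv^[2] X 0) := by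
    rw [show (2:ℕ) = 1+1 from rfl, iter_deriv_succ', Function.iterate_one, derivY_fun]
    have hc : HasDerivAt (fun h : ℝ => fderiv ℝ (fun y => G x y) (X h))
        (Q2 (deriv X 0)) 0 := by
      have h2 : HasFDerivAt (fderiv ℝ (fun y => G x y)) Q2 (X 0) := by
        rw [hX0, hQ2def]
        exact (hGx1.differentiable (by simp) x).hasFDerivAt
      exact h2.comp_hasDerivAt 0 hXd0
    have hu2 : HasDerivAt (deriv X) (deriv^[2] X 0) 0 := by
      have h3 := hasDerivAt_iter hX' 1 0
      rwa [Function.iterate_one] at h3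
    have e := (hc.clm_apply hu2).deriv
    rw [dX1, hX0] at e
    exact e.trans (by rw [hSdef])
  have dP3 : deriv^[3] P 0 = (S v + S v) - (3:ℝ) • Q2 p p := by
    have h1 : deriv^[3] P 0 =
        -((((2:ℕ):ℝ)+1) • deriv^[2] (fun h : ℝ => G x (X h)) 0 +
          (1/12:ℝ) • deriv^[3] (fun h : ℝ => h^3 • A (G x (X h))) 0) :=
      hPit 2 (by norm_num)
    rw [iter_deriv_cube₃ huY, hY0, dY2, dX2, map_neg, hA2S v] at h1
    rw [h1]
    push_cast
    module
  have hAq1 : deriv^[1] (fun h : ℝ => A ((2:ℝ)⁻¹ • (p + P h))) 0 =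
      A (deriv^[1] (fun h : ℝ => (2:ℝ)⁻¹ • (p + P h)) 0) := by
    rw [iter_deriv_clm A hq 1]
  have dX4 : deriv^[4] X 0 = (S v + S v) - (6:ℝ) • Q2 p p := by
    have h1 : deriv^[4] X 0 =
        (((3:ℕ):ℝ)+1) • deriv^[3] (fun h : ℝ => (2:ℝ)⁻¹ • (p + P h)) 0 +
          (1/12:ℝ) • deriv^[4] (fun h : ℝ => h^3 • A ((2:ℝ)⁻¹ • (p + P h))) 0 :=
      hXit 3 (by norm_num)
    rw [iter_deriv_cube₄ hu] at h1
    rw [show deriv (fun h : ℝ => A ((2:ℝ)⁻¹ • (p + P h))) 0 =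
        A (deriv^[1] (fun h : ℝ => (2:ℝ)⁻¹ • (p + P h)) 0) from hAq1] at h1
    rw [hqd1, Function.iterate_one, dP1, map_smul, map_neg, hA2S v, hqd3, dP3] at h1
    rw [h1]
    push_cast
    module
  have hQit : iteratedFDeriv ℝ 2 (fun y => G x y) x ![p, p] = Q2 p p := by
    rw [iteratedFDeriv_two_apply]
    simp [hQ2def]
  refine ⟨hX0, hP0, dX1, ?_, dX2, ?_, ?_, ?_, ?_⟩
  · rw [dP1]
  · rw [dP2, hA2S p]
  · rw [dX3, hA2S p]
  · rw [dP3, hQit, hA2S v]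
  · rw [dX4, hQit, hA2S v]
    module
end

section
/- Under the hypotheses of the preceding LEX setup (V : ℝ^m → ℝ smooth; G smooth, symmetric, with G(z,z) = ∇V(z); x ∈ ℝ^m fixed; B := 3·D₂²G(x,x); δ(h) = h·I + (h³/12)·Hess V(x) + h⁵R(h); for each p ∈ ℝ^m smooth solutions X_p, P_p of X_p(h) = x + δ(h)(p + P_p(h))/2, P_p(h) = p − δ(h)ᵀ G(x, X_p(h))), the following are equivalent: (i) for every p ∈ ℝ^m the derivatives of (X_p, P_p) at h = 0 up to order 3 coincide with those of the exact solution of ẋ = p, ṗ = −∇V(x) with initial data (x,p), i.e. in addition to the always-valid identities one has P_p'''(0) = Hess V(x)∇V(x) − D³V(x)(p,p) for all p; (ii) B = D³V(x), i.e. 3·D₂²G(x,x) = D³V(x) as symmetric bilinear ℝ^m-valued maps. (The locally exact LEX modification of a symmetric discrete gradient scheme has order at least 3 if and only if B_{γμν} = V,_{γμν}; in particular the AVF-LEX scheme, for which B = D³V always, is of order at least 3.) -/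
open scoped Topology ContDiff RealInnerProductSpace

section Aux
variable {E : Type*} [NormedAddCommGroup E] [NormedSpace ℝ E]

private lemma cd_deriv {f : ℝ → E} (h : ContDiff ℝ ∞ f) : ContDiff ℝ ∞ (deriv f) :=
  (contDiff_infty_iff_deriv.mp h).2

private lemma cd_diff {f : ℝ → E} (h : ContDiff ℝ ∞ f) : Differentiable ℝ f :=
  h.differentiable (by simp)

/-- Derivatives at `0` of `t ↦ c + t•f₁ t + (a t³)•f₂ t + t⁵•f₃ t`. -/
theorem shape_derivs (c : E) (a : ℝ) (f₁ f₂ f₃ : ℝ → E)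
    (h₁ : ContDiff ℝ ∞ f₁) (h₂ : ContDiff ℝ ∞ f₂) (h₃ : ContDiff ℝ ∞ f₃) :
    deriv (fun t : ℝ => c + (t • f₁ t + ((a * t ^ 3) • f₂ t + t ^ 5 • f₃ t))) 0 = f₁ 0 ∧
    deriv (deriv (fun t : ℝ => c + (t • f₁ t + ((a * t ^ 3) • f₂ t + t ^ 5 • f₃ t)))) 0
      = (2:ℝ) • deriv f₁ 0 ∧
    deriv (deriv (deriv (fun t : ℝ => c + (t • f₁ t + ((a * t ^ 3) • f₂ t + t ^ 5 • f₃ t))))) 0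
      = (3:ℝ) • deriv (deriv f₁) 0 + (6 * a) • f₂ 0 := by
  have d₁ := cd_diff h₁
  have d₂ := cd_diff h₂
  have d₃ := cd_diff h₃
  have d₁' := cd_diff (cd_deriv h₁)
  have d₂' := cd_diff (cd_deriv h₂)
  have d₃' := cd_diff (cd_deriv h₃)
  have d₁'' := cd_diff (cd_deriv (cd_deriv h₁))
  have d₂'' := cd_diff (cd_deriv (cd_deriv h₂))
  have d₃'' := cd_diff (cd_deriv (cd_deriv h₃))
  -- first derivative, globally
  have e1 : deriv (fun t : ℝ => c + (t • f₁ t + ((a * t ^ 3) • f₂ t + t ^ 5 • f₃ t)))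
      = fun t => (f₁ t + t • deriv f₁ t) +
          (((3 * a) * t ^ 2) • f₂ t + (a * t ^ 3) • deriv f₂ t +
            ((5 * t ^ 4) • f₃ t + t ^ 5 • deriv f₃ t)) := by
    funext t
    have h := (((hasDerivAt_id' (x := t)).smul (d₁ t).hasDerivAt).add
      ((((hasDerivAt_pow 3 t).const_mul a).smul (d₂ t).hasDerivAt).add
        ((hasDerivAt_pow 5 t).smul (d₃ t).hasDerivAt))).const_add c
    erw [h.deriv]
    match_scalars <;> push_cast <;> ring
  -- second derivative, globally
  have e2 : deriv (fun t => (f₁ t + t • deriv f₁ t) +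
          (((3 * a) * t ^ 2) • f₂ t + (a * t ^ 3) • deriv f₂ t +
            ((5 * t ^ 4) • f₃ t + t ^ 5 • deriv f₃ t)))
      = fun t => ((2:ℝ) • deriv f₁ t + t • deriv (deriv f₁) t) +
          (((6 * a) * t) • f₂ t + ((6 * a) * t ^ 2) • deriv f₂ t +
            (a * t ^ 3) • deriv (deriv f₂) t +
          ((20 * t ^ 3) • f₃ t + (10 * t ^ 4) • deriv f₃ t +
            t ^ 5 • deriv (deriv f₃) t)) := by
    funext t
    have h := (((d₁ t).hasDerivAt.add ((hasDerivAt_id' (x := t)).smul (d₁' t).hasDerivAt)).add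
      (((((hasDerivAt_pow 2 t).const_mul (3*a)).smul (d₂ t).hasDerivAt).add
          (((hasDerivAt_pow 3 t).const_mul a).smul (d₂' t).hasDerivAt)).add
        ((((hasDerivAt_pow 4 t).const_mul 5).smul (d₃ t).hasDerivAt).add
          ((hasDerivAt_pow 5 t).smul (d₃' t).hasDerivAt))))
    erw [h.deriv]
    match_scalars <;> push_cast <;> ring
  -- third derivative at 0
  have e3 : deriv (fun t : ℝ => ((2:ℝ) • deriv f₁ t + t • deriv (deriv f₁) t) +
          (((6 * a) * t) • f₂ t + ((6 * a) * t ^ 2) • deriv f₂ t +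
            (a * t ^ 3) • deriv (deriv f₂) t +
          ((20 * t ^ 3) • f₃ t + (10 * t ^ 4) • deriv f₃ t +
            t ^ 5 • deriv (deriv f₃) t))) 0
      = (3:ℝ) • deriv (deriv f₁) 0 + (6 * a) • f₂ 0 := by
    have hA := ((d₁' (0:ℝ)).hasDerivAt.const_smul (2:ℝ)).add
        ((hasDerivAt_id' (x := (0:ℝ))).smul (d₁'' 0).hasDerivAt)
    have hB := ((((hasDerivAt_id' (x := (0:ℝ))).const_mul (6*a)).smul (d₂ 0).hasDerivAt).add
        (((hasDerivAt_pow 2 (0:ℝ)).const_mul (6*a)).smul (d₂' 0).hasDerivAt)).add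
        (((hasDerivAt_pow 3 (0:ℝ)).const_mul a).smul (d₂'' 0).hasDerivAt)
    have hC := ((((hasDerivAt_pow 3 (0:ℝ)).const_mul 20).smul (d₃ 0).hasDerivAt).add
        (((hasDerivAt_pow 4 (0:ℝ)).const_mul 10).smul (d₃' 0).hasDerivAt)).add
        ((hasDerivAt_pow 5 (0:ℝ)).smul (d₃'' 0).hasDerivAt)
    have h := hA.add (hB.add hC)
    erw [h.deriv]
    match_scalars <;> push_cast <;> ring
  refine ⟨?_, ?_, ?_⟩
  · rw [e1]; match_scalars <;> norm_num
  · rw [e1, e2]; match_scalars <;> norm_num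
  · rw [e1, e2]; exact e3

end Aux

set_option maxHeartbeats 2000000 in
/-- The LEX modification of a symmetric discrete gradient
scheme has order at least 3 (i.e. for every initial momentum `p` the
derivatives of the numerical solution at `h = 0` up to order 3 coincide with
those of the exact solution of `ẋ = p, ṗ = −∇V(x)`) if and only if
`B = 3·D₂²G(x,x) = D³V(x)`. In particular AVF-LEX is of order at least 3. -/
theorem lex_scheme_order_three_iff
    (m : ℕ)
    (V : EuclideanSpace ℝ (Fin m) → ℝ) (hV : ContDiff ℝ (⊤ : ℕ∞) V)
    (G : EuclideanSpace ℝ (Fin m) → EuclideanSpace ℝ (Fin m) →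
      EuclideanSpace ℝ (Fin m))
    (hG : ContDiff ℝ (⊤ : ℕ∞) (fun q : EuclideanSpace ℝ (Fin m) × EuclideanSpace ℝ (Fin m) =>
      G q.1 q.2))
    (hsym : ∀ u v, G u v = G v u)
    (hcons : ∀ z, G z z = gradient V z)
    (x : EuclideanSpace ℝ (Fin m))
    (δ R : ℝ → (EuclideanSpace ℝ (Fin m) →L[ℝ] EuclideanSpace ℝ (Fin m)))
    (hR : ContDiff ℝ (⊤ : ℕ∞) R)
    (hδ : ∀ h : ℝ, δ h = h • ContinuousLinearMap.id ℝ (EuclideanSpace ℝ (Fin m)) +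
      (h ^ 3 / 12) • fderiv ℝ (fun z => gradient V z) x + h ^ 5 • R h)
    (X P : EuclideanSpace ℝ (Fin m) → ℝ → EuclideanSpace ℝ (Fin m))
    (hX : ∀ p, ContDiff ℝ (⊤ : ℕ∞) (X p)) (hP : ∀ p, ContDiff ℝ (⊤ : ℕ∞) (P p))
    (hscheme : ∀ p, ∀ᶠ h in 𝓝 (0:ℝ),
      X p h = x + δ h ((2:ℝ)⁻¹ • (p + P p h)) ∧
      P p h = p - ContinuousLinearMap.adjoint (δ h) (G x (X p h))) :
    (∀ p : EuclideanSpace ℝ (Fin m),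
        deriv (X p) 0 = p ∧
        deriv (P p) 0 = -gradient V x ∧
        deriv^[2] (X p) 0 = -gradient V x ∧
        deriv^[2] (P p) 0 = -(fderiv ℝ (fun z => gradient V z) x p) ∧
        deriv^[3] (X p) 0 = -(fderiv ℝ (fun z => gradient V z) x p) ∧
        deriv^[3] (P p) 0 =
          fderiv ℝ (fun z => gradient V z) x (gradient V x) -
            iteratedFDeriv ℝ 2 (fun z => gradient V z) x ![p, p]) ↔
      (3:ℝ) • iteratedFDeriv ℝ 2 (fun y => G x y) x =
        iteratedFDeriv ℝ 2 (fun z => gradient V z) x := by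
  have one_le : (∞ : WithTop ℕ∞) ≠ 0 := by simp
  set Hm := fderiv ℝ (fun z => gradient V z) x with hHmdef
  have hf : ContDiff ℝ (⊤ : ℕ∞) (fun y => G x y) :=
    hG.comp (contDiff_const.prodMk contDiff_id)
  have hgrad : ContDiff ℝ (⊤ : ℕ∞) (fun z : EuclideanSpace ℝ (Fin m) => gradient V z) := by
    have h : (fun z : EuclideanSpace ℝ (Fin m) => gradient V z) = fun z => G z z :=
      funext fun z => (hcons z).symm
    rw [h]; exact hG.comp (contDiff_id.prodMk contDiff_id)
  -- the key relation `Hess V = 2 D₂G(x,x)`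
  have hK1 : ∀ w, Hm w = (2:ℝ) • fderiv ℝ (fun y => G x y) x w := by
    intro w
    have hΦd : HasFDerivAt (fun q : EuclideanSpace ℝ (Fin m) × EuclideanSpace ℝ (Fin m) =>
        G q.1 q.2) (fderiv ℝ (fun q : EuclideanSpace ℝ (Fin m) × EuclideanSpace ℝ (Fin m) =>
        G q.1 q.2) (x, x)) (x, x) :=
      ((hG.differentiable (by simp)) (x, x)).hasFDerivAt
    set a := fderiv ℝ (fun q : EuclideanSpace ℝ (Fin m) × EuclideanSpace ℝ (Fin m) =>
        G q.1 q.2) (x, x) with hadef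
    have hHma : ∀ u, Hm u = a (u, u) := by
      intro u
      have hdiagF0 := hΦd.comp (f := fun z : EuclideanSpace ℝ (Fin m) => (z, z)) x (((hasFDerivAt_id (𝕜 := ℝ) x)).prodMk (hasFDerivAt_id (𝕜 := ℝ) x))
      have hdiagF : HasFDerivAt (fun z : EuclideanSpace ℝ (Fin m) => G z z)
          (a.comp ((ContinuousLinearMap.id ℝ _).prod (ContinuousLinearMap.id ℝ _))) x := hdiagF0
      have h : (fun z : EuclideanSpace ℝ (Fin m) => gradient V z) = fun z => G z z :=
        funext fun z => (hcons z).symm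
      rw [hHmdef, h, hdiagF.fderiv]
      rfl
    have hfa : ∀ u, fderiv ℝ (fun y => G x y) x u = a (0, u) := by
      intro u
      have hin : HasFDerivAt (fun y : EuclideanSpace ℝ (Fin m) => (x, y))
          ((0 : _ →L[ℝ] _).prod (ContinuousLinearMap.id ℝ _)) x :=
        (hasFDerivAt_const x x).prodMk (hasFDerivAt_id x)
      have h2 : HasFDerivAt (fun y : EuclideanSpace ℝ (Fin m) => G x y)
          (a.comp ((0 : _ →L[ℝ] _).prod (ContinuousLinearMap.id ℝ _))) x :=
        hΦd.comp x hin
      rw [h2.fderiv]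
      rfl
    have hswap : ∀ u v', a (u, v') = a (v', u) := by
      intro u v'
      have hsw : HasFDerivAt (Prod.swap :
            EuclideanSpace ℝ (Fin m) × EuclideanSpace ℝ (Fin m) → _)
          ((ContinuousLinearMap.snd ℝ _ _).prod (ContinuousLinearMap.fst ℝ _ _)) (x, x) :=
        hasFDerivAt_snd.prodMk hasFDerivAt_fst
      have h1 : HasFDerivAt ((fun q : EuclideanSpace ℝ (Fin m) × EuclideanSpace ℝ (Fin m) =>
          G q.1 q.2) ∘ Prod.swap)
          (a.comp ((ContinuousLinearMap.snd ℝ _ _).prod (ContinuousLinearMap.fst ℝ _ _)))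
          (x, x) := hΦd.comp (x, x) hsw
      have h2 : ((fun q : EuclideanSpace ℝ (Fin m) × EuclideanSpace ℝ (Fin m) =>
          G q.1 q.2) ∘ Prod.swap) = fun q => G q.1 q.2 := funext fun q => hsym q.2 q.1
      rw [h2] at h1
      have h3 := hΦd.unique h1
      have h4 := congrArg (fun L : _ →L[ℝ] EuclideanSpace ℝ (Fin m) => L (u, v')) h3
      simpa using h4
    have h1 : ((w, w) : EuclideanSpace ℝ (Fin m) × EuclideanSpace ℝ (Fin m))
        = (w, 0) + (0, w) := by simp
    rw [hHma w, h1, map_add, hswap w 0, hfa w, ← two_smul ℝ]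
  -- the Hessian is self-adjoint
  have hsa : ContinuousLinearMap.adjoint Hm = Hm := by
    have hsymm : ∀ u v', fderiv ℝ (fderiv ℝ V) x u v' = fderiv ℝ (fderiv ℝ V) x v' u :=
      hV.contDiffAt.isSymmSndFDerivAt (by rw [minSmoothness_of_isRCLikeNormedField]; exact WithTop.coe_le_coe.mpr le_top)
    have hkey : ∀ u v', ⟪Hm u, v'⟫ = fderiv ℝ (fderiv ℝ V) x u v' := by
      intro u v'
      have hdV : HasFDerivAt (fderiv ℝ V) (fderiv ℝ (fderiv ℝ V) x) x :=
        (((hV.fderiv_right (by simp)).differentiable one_le) x).hasFDerivAt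
      have hgradDiff : HasFDerivAt (fun z : EuclideanSpace ℝ (Fin m) => gradient V z) Hm x :=
        ((hgrad.differentiable (by simp)) x).hasFDerivAt
      have hc1 : HasFDerivAt (fun z : EuclideanSpace ℝ (Fin m) => (innerSL ℝ v') (gradient V z))
          ((innerSL ℝ v').comp Hm) x := (innerSL ℝ v').hasFDerivAt.comp x hgradDiff
      have hc2 : HasFDerivAt (fun z : EuclideanSpace ℝ (Fin m) => (fderiv ℝ V z) v')
          ((ContinuousLinearMap.apply ℝ ℝ v').comp (fderiv ℝ (fderiv ℝ V) x)) x :=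
        (ContinuousLinearMap.apply ℝ ℝ v').hasFDerivAt.comp x hdV
      have hfun : (fun z : EuclideanSpace ℝ (Fin m) => (innerSL ℝ v') (gradient V z))
          = fun z => (fderiv ℝ V z) v' := by
        funext z
        have h1 : ⟪gradient V z, v'⟫ = fderiv ℝ V z v' :=
          InnerProductSpace.toDual_symm_apply
        have h2 : (innerSL ℝ v') (gradient V z) = ⟪v', gradient V z⟫ := rfl
        rw [h2, real_inner_comm, h1]
      rw [hfun] at hc1
      have huniq := hc1.unique hc2
      have happ := congrArg (fun L : _ →L[ℝ] ℝ => L u) huniq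
      have h3 : ⟪v', Hm u⟫ = fderiv ℝ (fderiv ℝ V) x u v' := happ
      rw [real_inner_comm] at h3
      exact h3
    refine ContinuousLinearMap.ext fun u => ?_
    refine ext_inner_right ℝ fun v' => ?_
    rw [ContinuousLinearMap.adjoint_inner_left, real_inner_comm (Hm v') u, hkey, hkey]
    exact hsymm v' u
  -- adjoint commutes with real scalars
  have hadj_smul : ∀ (c : ℝ) (A : EuclideanSpace ℝ (Fin m) →L[ℝ] EuclideanSpace ℝ (Fin m)),
      ContinuousLinearMap.adjoint (c • A) = c • ContinuousLinearMap.adjoint A := by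
    intro c A
    simp
  have hadj_exp : ∀ t : ℝ, ContinuousLinearMap.adjoint (δ t)
      = t • ContinuousLinearMap.id ℝ (EuclideanSpace ℝ (Fin m))
        + (t ^ 3 / 12) • ContinuousLinearMap.adjoint Hm
        + t ^ 5 • ContinuousLinearMap.adjoint (R t) := by
    intro t
    rw [hδ t, map_add, map_add, hadj_smul, hadj_smul, hadj_smul,
      ContinuousLinearMap.adjoint_id]
  -- smoothness of the adjoint map
  have hadjC : ContDiff ℝ ∞ (fun A : EuclideanSpace ℝ (Fin m) →L[ℝ] EuclideanSpace ℝ (Fin m) =>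
      ContinuousLinearMap.adjoint A) := by
    let L : (EuclideanSpace ℝ (Fin m) →L[ℝ] EuclideanSpace ℝ (Fin m)) →ₗ[ℝ]
        (EuclideanSpace ℝ (Fin m) →L[ℝ] EuclideanSpace ℝ (Fin m)) :=
      { toFun := fun A => ContinuousLinearMap.adjoint A
        map_add' := fun A B => map_add _ A B
        map_smul' := fun c A => by simpa using hadj_smul c A }
    have hcont : Continuous (fun A : EuclideanSpace ℝ (Fin m) →L[ℝ] EuclideanSpace ℝ (Fin m) =>
        ContinuousLinearMap.adjoint A) :=
      (ContinuousLinearMap.adjoint :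
        (EuclideanSpace ℝ (Fin m) →L[ℝ] EuclideanSpace ℝ (Fin m)) ≃ₗᵢ⋆[ℝ] _).continuous
    exact (ContinuousLinearMap.mk L hcont : _ →L[ℝ] _).contDiff
  -- the core computation of the derivatives at 0, for each p
  have main : ∀ p : EuclideanSpace ℝ (Fin m),
      deriv (X p) 0 = p ∧
      deriv (P p) 0 = -gradient V x ∧
      deriv (deriv (X p)) 0 = -gradient V x ∧
      deriv (deriv (P p)) 0 = -(Hm p) ∧
      deriv (deriv (deriv (X p))) 0 = -(Hm p) ∧
      deriv (deriv (deriv (P p))) 0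
        = Hm (gradient V x) - (3:ℝ) • fderiv ℝ (fderiv ℝ (fun y => G x y)) x p p := by
    intro p
    have hXc : ContDiff ℝ ∞ (X p) := (hX p).of_le (by simp)
    have hPc : ContDiff ℝ ∞ (P p) := (hP p).of_le (by simp)
    have hv : ContDiff ℝ ∞ (fun t => (2:ℝ)⁻¹ • (p + P p t)) :=
      (contDiff_const.add hPc).const_smul _
    have hgc : ContDiff ℝ ∞ (fun t => G x (X p t)) :=
      (hf.comp (hX p)).of_le (by simp)
    have hf2x : ContDiff ℝ ∞ (fun t => Hm ((2:ℝ)⁻¹ • (p + P p t))) := Hm.contDiff.comp hv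
    have hf3x : ContDiff ℝ ∞ (fun t => (R t) ((2:ℝ)⁻¹ • (p + P p t))) :=
      (hR.of_le (by simp)).clm_apply hv
    have hg1 : ContDiff ℝ ∞ (fun t => -(G x (X p t))) := hgc.neg
    have hg2 : ContDiff ℝ ∞ (fun t => -(ContinuousLinearMap.adjoint Hm (G x (X p t)))) :=
      ((ContinuousLinearMap.adjoint Hm).contDiff.comp hgc).neg
    have hg3 : ContDiff ℝ ∞ (fun t => -(ContinuousLinearMap.adjoint (R t) (G x (X p t)))) :=
      ((hadjC.comp (hR.of_le (by simp))).clm_apply hgc).neg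
    -- eventual closed forms of X p and P p
    have hXev : X p =ᶠ[𝓝 (0:ℝ)] fun t =>
        x + (t • ((2:ℝ)⁻¹ • (p + P p t)) +
          (((12:ℝ)⁻¹ * t ^ 3) • Hm ((2:ℝ)⁻¹ • (p + P p t)) +
            t ^ 5 • (R t) ((2:ℝ)⁻¹ • (p + P p t)))) := by
      filter_upwards [hscheme p] with t ht
      rw [ht.1, hδ t]
      simp only [ContinuousLinearMap.add_apply, ContinuousLinearMap.smul_apply,
        ContinuousLinearMap.coe_id', id_eq]
      match_scalars <;> ring
    have hPev : P p =ᶠ[𝓝 (0:ℝ)] fun t =>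
        p + (t • (-(G x (X p t))) +
          (((12:ℝ)⁻¹ * t ^ 3) • (-(ContinuousLinearMap.adjoint Hm (G x (X p t)))) +
            t ^ 5 • (-(ContinuousLinearMap.adjoint (R t) (G x (X p t)))))) := by
      filter_upwards [hscheme p] with t ht
      rw [ht.2, hadj_exp t]
      simp only [ContinuousLinearMap.add_apply, ContinuousLinearMap.smul_apply,
        ContinuousLinearMap.coe_id', id_eq, sub_eq_add_neg]
      match_scalars <;> ring
    have hX0 : X p 0 = x := by
      rw [hXev.eq_of_nhds]; norm_num
    have hP0 : P p 0 = p := by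
      rw [hPev.eq_of_nhds]; norm_num
    obtain ⟨mx1, mx2, mx3⟩ := shape_derivs x ((12:ℝ)⁻¹)
      (fun t => (2:ℝ)⁻¹ • (p + P p t))
      (fun t => Hm ((2:ℝ)⁻¹ • (p + P p t)))
      (fun t => (R t) ((2:ℝ)⁻¹ • (p + P p t))) hv hf2x hf3x
    obtain ⟨mp1, mp2, mp3⟩ := shape_derivs p ((12:ℝ)⁻¹)
      (fun t => -(G x (X p t)))
      (fun t => -(ContinuousLinearMap.adjoint Hm (G x (X p t))))
      (fun t => -(ContinuousLinearMap.adjoint (R t) (G x (X p t)))) hg1 hg2 hg3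
    -- derivatives of the auxiliary functions
    have hvd : deriv (fun t => (2:ℝ)⁻¹ • (p + P p t)) = fun t => (2:ℝ)⁻¹ • deriv (P p) t := by
      funext t
      rw [deriv_fun_const_smul _ ((hPc.differentiable one_le t).const_add p), deriv_const_add]
    have hvd0 : deriv (fun t => (2:ℝ)⁻¹ • (p + P p t)) 0 = (2:ℝ)⁻¹ • deriv (P p) 0 := by
      rw [deriv_fun_const_smul _ ((hPc.differentiable one_le 0).const_add p), deriv_const_add]
    have hvd2 : deriv (deriv (fun t => (2:ℝ)⁻¹ • (p + P p t))) 0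
        = (2:ℝ)⁻¹ • deriv (deriv (P p)) 0 := by
      rw [hvd]
      exact deriv_fun_const_smul _ ((cd_deriv hPc).differentiable one_le 0)
    have hgneg : deriv (fun t => -(G x (X p t))) = fun t => -(deriv (fun s => G x (X p s)) t) :=
      funext fun t => deriv.neg
    have hgneg2 : deriv (deriv (fun t => -(G x (X p t)))) 0
        = -(deriv (deriv (fun s => G x (X p s))) 0) := by
      rw [hgneg]; exact deriv.neg
    have hgneg0 : deriv (fun t => -(G x (X p t))) 0
        = -(deriv (fun s => G x (X p s)) 0) := deriv.neg
    have hdg : deriv (fun s => G x (X p s))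
        = fun s => fderiv ℝ (fun y => G x y) (X p s) (deriv (X p) s) := by
      funext s
      exact (((hf.differentiable (by simp)) (X p s)).hasFDerivAt.comp_hasDerivAt s
        ((hXc.differentiable one_le s).hasDerivAt)).deriv
    -- first derivatives
    have dX1 : deriv (X p) 0 = p := by
      have t1 : deriv (X p) 0 = (2:ℝ)⁻¹ • (p + P p 0) := hXev.deriv_eq.trans mx1
      rw [t1, hP0]; module
    have dP1 : deriv (P p) 0 = -gradient V x := by
      have t1 : deriv (P p) 0 = -(G x (X p 0)) := hPev.deriv_eq.trans mp1
      rw [t1, hX0, hcons x]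
    -- second derivatives
    have dX2 : deriv (deriv (X p)) 0 = -gradient V x := by
      have t2 : deriv (deriv (X p)) 0
          = (2:ℝ) • deriv (fun t => (2:ℝ)⁻¹ • (p + P p t)) 0 := hXev.deriv.deriv_eq.trans mx2
      rw [t2, hvd0, dP1]; module
    have dP2 : deriv (deriv (P p)) 0 = -(Hm p) := by
      have t2 : deriv (deriv (P p)) 0
          = (2:ℝ) • deriv (fun t => -(G x (X p t))) 0 := hPev.deriv.deriv_eq.trans mp2
      have hdg0 : deriv (fun s => G x (X p s)) 0
          = fderiv ℝ (fun y => G x y) (X p 0) (deriv (X p) 0) := by rw [hdg]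
      rw [t2, hgneg0, hdg0, hX0, dX1, hK1 p]; module
    -- third derivatives
    have dX3 : deriv (deriv (deriv (X p))) 0 = -(Hm p) := by
      have t3 : deriv (deriv (deriv (X p))) 0
          = (3:ℝ) • deriv (deriv (fun t => (2:ℝ)⁻¹ • (p + P p t))) 0
            + (6 * (12:ℝ)⁻¹) • Hm ((2:ℝ)⁻¹ • (p + P p 0)) := hXev.deriv.deriv.deriv_eq.trans mx3
      have hpp : (2:ℝ)⁻¹ • (p + P p 0) = p := by rw [hP0]; module
      rw [t3, hvd2, dP2, hpp]; module
    have hddg : deriv (deriv (fun s => G x (X p s))) 0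
        = fderiv ℝ (fderiv ℝ (fun y => G x y)) x p p
          + fderiv ℝ (fun y => G x y) x (deriv (deriv (X p)) 0) := by
      rw [hdg]
      have hc : HasDerivAt (fun s => fderiv ℝ (fun y => G x y) (X p s))
          (fderiv ℝ (fderiv ℝ (fun y => G x y)) x (deriv (X p) 0)) 0 := by
        have h1 : HasFDerivAt (fderiv ℝ (fun y => G x y))
            (fderiv ℝ (fderiv ℝ (fun y => G x y)) (X p 0)) (X p 0) :=
          (((hf.fderiv_right (by simp)).differentiable one_le) (X p 0)).hasFDerivAt
        have h2 := h1.comp_hasDerivAt 0 ((hXc.differentiable one_le 0).hasDerivAt)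
        rwa [hX0] at h2
      have hu : HasDerivAt (deriv (X p)) (deriv (deriv (X p)) 0) 0 :=
        ((cd_deriv hXc).differentiable one_le 0).hasDerivAt
      have h3 := (hc.clm_apply hu).deriv
      rw [h3, dX1, hX0]
    have dP3 : deriv (deriv (deriv (P p))) 0
        = Hm (gradient V x) - (3:ℝ) • fderiv ℝ (fderiv ℝ (fun y => G x y)) x p p := by
      have t3 : deriv (deriv (deriv (P p))) 0
          = (3:ℝ) • deriv (deriv (fun t => -(G x (X p t)))) 0
            + (6 * (12:ℝ)⁻¹) • (-(ContinuousLinearMap.adjoint Hm (G x (X p 0)))) :=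
        hPev.deriv.deriv.deriv_eq.trans mp3
      have hfgv : fderiv ℝ (fun y => G x y) x (gradient V x)
          = (2:ℝ)⁻¹ • Hm (gradient V x) := by
        have := hK1 (gradient V x)
        rw [this]; module
      rw [t3, hgneg2, hddg, dX2, map_neg, hfgv, hX0, hcons x, hsa]
      module
    exact ⟨dX1, dP1, dX2, dP2, dX3, dP3⟩
  -- symmetry of the second derivatives
  have symQ : ∀ u w, fderiv ℝ (fderiv ℝ (fun y => G x y)) x u w
      = fderiv ℝ (fderiv ℝ (fun y => G x y)) x w u :=
    hf.contDiffAt.isSymmSndFDerivAt (by rw [minSmoothness_of_isRCLikeNormedField]; exact WithTop.coe_le_coe.mpr le_top)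
  have symW : ∀ u w, fderiv ℝ (fderiv ℝ (fun z => gradient V z)) x u w
      = fderiv ℝ (fderiv ℝ (fun z => gradient V z)) x w u :=
    hgrad.contDiffAt.isSymmSndFDerivAt (by rw [minSmoothness_of_isRCLikeNormedField]; exact WithTop.coe_le_coe.mpr le_top)
  constructor
  · intro hI
    have diag : ∀ p : EuclideanSpace ℝ (Fin m),
        (3:ℝ) • fderiv ℝ (fderiv ℝ (fun y => G x y)) x p p
          = fderiv ℝ (fderiv ℝ (fun z => gradient V z)) x p p := by
      intro p
      have h6 : deriv (deriv (deriv (P p))) 0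
          = Hm (gradient V x) - iteratedFDeriv ℝ 2 (fun z => gradient V z) x ![p, p] :=
        (hI p).2.2.2.2.2
      have h6' := (main p).2.2.2.2.2
      have key : Hm (gradient V x) - (3:ℝ) • fderiv ℝ (fderiv ℝ (fun y => G x y)) x p p
          = Hm (gradient V x) - iteratedFDeriv ℝ 2 (fun z => gradient V z) x ![p, p] :=
        h6'.symm.trans h6
      have h7 := sub_right_injective key
      rw [h7, iteratedFDeriv_two_apply]
      simp
    refine ContinuousMultilinearMap.ext fun mv => ?_
    rw [ContinuousMultilinearMap.smul_apply, iteratedFDeriv_two_apply, iteratedFDeriv_two_apply]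
    have h1 := diag (mv 0 + mv 1)
    have h2 := diag (mv 0)
    have h3 := diag (mv 1)
    have e1 : fderiv ℝ (fderiv ℝ (fun y => G x y)) x (mv 0 + mv 1) (mv 0 + mv 1)
        = fderiv ℝ (fderiv ℝ (fun y => G x y)) x (mv 0) (mv 0)
          + fderiv ℝ (fderiv ℝ (fun y => G x y)) x (mv 0) (mv 1)
          + (fderiv ℝ (fderiv ℝ (fun y => G x y)) x (mv 1) (mv 0)
            + fderiv ℝ (fderiv ℝ (fun y => G x y)) x (mv 1) (mv 1)) := by
      simp only [map_add, ContinuousLinearMap.add_apply]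
      abel
    have e2 : fderiv ℝ (fderiv ℝ (fun z => gradient V z)) x (mv 0 + mv 1) (mv 0 + mv 1)
        = fderiv ℝ (fderiv ℝ (fun z => gradient V z)) x (mv 0) (mv 0)
          + fderiv ℝ (fderiv ℝ (fun z => gradient V z)) x (mv 0) (mv 1)
          + (fderiv ℝ (fderiv ℝ (fun z => gradient V z)) x (mv 1) (mv 0)
            + fderiv ℝ (fderiv ℝ (fun z => gradient V z)) x (mv 1) (mv 1)) := by
      simp only [map_add, ContinuousLinearMap.add_apply]
      abel
    rw [e1, e2, symQ (mv 1) (mv 0), symW (mv 1) (mv 0)] at h1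
    have h4 : (2:ℝ) • ((3:ℝ) • fderiv ℝ (fderiv ℝ (fun y => G x y)) x (mv 0) (mv 1))
        = (2:ℝ) • fderiv ℝ (fderiv ℝ (fun z => gradient V z)) x (mv 0) (mv 1) := by
      linear_combination (norm := module) h1 - h2 - h3
    exact smul_right_injective _ two_ne_zero h4
  · intro hB p
    obtain ⟨d1, d2, d3, d4, d5, d6⟩ := main p
    refine ⟨d1, d2, d3, d4, d5, ?_⟩
    have happ := congrArg
      (fun L : ContinuousMultilinearMap ℝ (fun _ : Fin 2 => EuclideanSpace ℝ (Fin m))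
        (EuclideanSpace ℝ (Fin m)) => L ![p, p]) hB
    simp only [ContinuousMultilinearMap.smul_apply] at happ
    rw [iteratedFDeriv_two_apply, iteratedFDeriv_two_apply] at happ
    simp only [Matrix.cons_val_zero, Matrix.cons_val_one, Matrix.head_cons] at happ
    have goal2 : deriv (deriv (deriv (P p))) 0
        = Hm (gradient V x) - iteratedFDeriv ℝ 2 (fun z => gradient V z) x ![p, p] := by
      rw [d6, iteratedFDeriv_two_apply]
      simp only [Matrix.cons_val_zero, Matrix.cons_val_one, Matrix.head_cons]
      rw [happ]
    exact goal2
end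

section
/- Let F : ℝ^N → ℝ^N be smooth, fix y ∈ ℝ^N, and suppose Y : ℝ → ℝ^N is smooth and satisfies, for all h near 0, the AVF scheme Y(h) = y + h·∫₀¹ F((1−t)y + t Y(h)) dt. Then Y(0) = y, Y'(0) = F(y), Y''(0) = F'(y)F(y), and Y'''(0) = (3/2) F'(y)F'(y)F(y) + F''(y)(F(y), F(y)). (This is the B-series expansion Δy_n = hF + (1/2)h²F'F + (1/12)h³(3F'F'F + 2F''(F,F)) + … of the AVF method; since the exact flow has y'''(0) = F''(F,F) + F'F'F, the AVF method is of order exactly 2 in general.) -/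
open MeasureTheory
open scoped Topology

section AVFHelpers

variable {E : Type*} [NormedAddCommGroup E] [NormedSpace ℝ E]

lemma avf_param_deriv {f f' : ℝ → ℝ → E}
    (hf : Continuous fun p : ℝ × ℝ => f p.1 p.2)
    (hf' : Continuous fun p : ℝ × ℝ => f' p.1 p.2)
    (hd : ∀ x t, HasDerivAt (fun x => f x t) (f' x t) x) (x₀ : ℝ) :
    HasDerivAt (fun x => ∫ t in (0:ℝ)..1, f x t) (∫ t in (0:ℝ)..1, f' x₀ t) x₀ := by
  obtain ⟨C, hC⟩ : ∃ C, ∀ p ∈ (Metric.closedBall x₀ 1) ×ˢ (Set.uIcc (0:ℝ) 1),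
      ‖f' p.1 p.2‖ ≤ C :=
    ((isCompact_closedBall x₀ 1).prod isCompact_uIcc).exists_bound_of_continuousOn
      hf'.continuousOn
  refine (intervalIntegral.hasDerivAt_integral_of_dominated_loc_of_deriv_le
    (bound := fun _ => C) (Metric.ball_mem_nhds x₀ one_pos) ?_ ?_ ?_ ?_ ?_ ?_).2
  · exact Filter.Eventually.of_forall fun x =>
      (hf.comp (Continuous.prodMk_right x)).aestronglyMeasurable
  · exact (hf.comp (Continuous.prodMk_right x₀)).intervalIntegrable 0 1
  · exact (hf'.comp (Continuous.prodMk_right x₀)).aestronglyMeasurable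
  · refine Filter.Eventually.of_forall fun t ht x hx => hC (x, t) ?_
    exact ⟨Metric.ball_subset_closedBall hx, Set.uIoc_subset_uIcc ht⟩
  · exact intervalIntegrable_const
  · exact Filter.Eventually.of_forall fun t _ x _ => hd x t

lemma avf_smul_hasDerivAt {c : ℝ → E} (hc : ContinuousAt c 0) :
    HasDerivAt (fun h : ℝ => h • c h) (c 0) 0 := by
  rw [hasDerivAt_iff_isLittleO]
  have h0 : Filter.Tendsto (fun x : ℝ => ‖c x - c 0‖) (𝓝 0) (𝓝 0) := by
    have h1 : Filter.Tendsto (fun x : ℝ => c x - c 0) (𝓝 0) (𝓝 (c 0 - c 0)) :=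
      hc.tendsto.sub tendsto_const_nhds
    rw [sub_self] at h1
    simpa using h1.norm
  rw [Asymptotics.isLittleO_iff]
  intro ε hε
  filter_upwards [h0.eventually (gt_mem_nhds hε)] with x hx
  have : x • c x - (0:ℝ) • c 0 - (x - 0) • c 0 = x • (c x - c 0) := by
    simp [smul_sub]
  rw [this, norm_smul]
  calc ‖x‖ * ‖c x - c 0‖ ≤ ‖x‖ * ε :=
        mul_le_mul_of_nonneg_left (le_of_lt hx) (norm_nonneg x)
    _ = ε * ‖x - 0‖ := by rw [sub_zero]; ring

lemma avf_id_smul {c : ℝ → E} {c' : E} {h : ℝ} (hc : HasDerivAt c c' h) :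
    HasDerivAt (fun x : ℝ => x • c x) (c h + h • c') h := by
  have := (hasDerivAt_id' h).smul hc
  simp only [one_smul, id_eq] at this
  exact this.congr_deriv (by abel)

end AVFHelpers

/-- B-series expansion of the AVF method
`Y(h) = y + h ∫₀¹ F((1−t)y + tY(h)) dt`:
`Y(0) = y`, `Y'(0) = F`, `Y''(0) = F'F`, and
`Y'''(0) = (3/2)F'F'F + F''(F,F)` (so the AVF method is of order exactly 2 in
general, since the exact flow has `y''' = F''(F,F) + F'F'F`). -/
theorem avf_bseries_third_order_coefficient
    (N : ℕ)
    (F : EuclideanSpace ℝ (Fin N) → EuclideanSpace ℝ (Fin N))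
    (hF : ContDiff ℝ (⊤ : ℕ∞) F)
    (y : EuclideanSpace ℝ (Fin N))
    (Y : ℝ → EuclideanSpace ℝ (Fin N)) (hY : ContDiff ℝ (⊤ : ℕ∞) Y)
    (hscheme : ∀ᶠ h in 𝓝 (0:ℝ),
      Y h = y + h • ∫ t in (0:ℝ)..1, F ((1 - t) • y + t • Y h)) :
    Y 0 = y ∧
    deriv Y 0 = F y ∧
    deriv^[2] Y 0 = fderiv ℝ F y (F y) ∧
    deriv^[3] Y 0 =
      (3/2 : ℝ) • fderiv ℝ F y (fderiv ℝ F y (F y)) +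
        iteratedFDeriv ℝ 2 F y ![F y, F y] := by
  set A := fderiv ℝ F with hA_def
  have hinf : (((⊤:ℕ∞) : WithTop ℕ∞) + 1 : WithTop ℕ∞) ≤ ((⊤:ℕ∞) : WithTop ℕ∞) := le_of_eq rfl
  have hF' : ContDiff ℝ ((⊤:ℕ∞) : WithTop ℕ∞) F := hF.of_le (by simp)
  have hY' : ContDiff ℝ ((⊤:ℕ∞) : WithTop ℕ∞) Y := hY.of_le (by simp)
  have hA : ContDiff ℝ ((⊤:ℕ∞) : WithTop ℕ∞) A := hF'.fderiv_right hinf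
  set A2 := fderiv ℝ A with hA2_def
  have hA2 : ContDiff ℝ ((⊤:ℕ∞) : WithTop ℕ∞) A2 := hA.fderiv_right hinf
  have hY1 : ContDiff ℝ ((⊤:ℕ∞) : WithTop ℕ∞) (deriv Y) := (contDiff_infty_iff_deriv.mp hY').2
  have hY2 : ContDiff ℝ ((⊤:ℕ∞) : WithTop ℕ∞) (deriv (deriv Y)) := (contDiff_infty_iff_deriv.mp hY1).2
  set g : ℝ → ℝ → EuclideanSpace ℝ (Fin N) :=
    fun h t => F ((1 - t) • y + t • Y h) with hg_def
  set g1 : ℝ → ℝ → EuclideanSpace ℝ (Fin N) :=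
    fun h t => A ((1 - t) • y + t • Y h) (t • deriv Y h) with hg1_def
  set g2 : ℝ → ℝ → EuclideanSpace ℝ (Fin N) :=
    fun h t =>
      (A2 ((1 - t) • y + t • Y h) (t • deriv Y h)) (t • deriv Y h)
        + A ((1 - t) • y + t • Y h) (t • deriv (deriv Y) h) with hg2_def
  set G : ℝ → EuclideanSpace ℝ (Fin N) := fun h => ∫ t in (0:ℝ)..1, g h t with hG_def
  set G1 : ℝ → EuclideanSpace ℝ (Fin N) := fun h => ∫ t in (0:ℝ)..1, g1 h t with hG1_def
  set G2 : ℝ → EuclideanSpace ℝ (Fin N) := fun h => ∫ t in (0:ℝ)..1, g2 h t with hG2_def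
  -- continuity facts
  have hzc : Continuous (fun p : ℝ × ℝ => (1 - p.2) • y + p.2 • Y p.1) :=
    (((continuous_const.sub continuous_snd).smul continuous_const).add
      (continuous_snd.smul (hY.continuous.comp continuous_fst)))
  have hv1 : Continuous (fun p : ℝ × ℝ => p.2 • deriv Y p.1) :=
    continuous_snd.smul (hY1.continuous.comp continuous_fst)
  have hv2 : Continuous (fun p : ℝ × ℝ => p.2 • deriv (deriv Y) p.1) :=
    continuous_snd.smul (hY2.continuous.comp continuous_fst)
  have hgc : Continuous fun p : ℝ × ℝ => g p.1 p.2 := hF.continuous.comp hzc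
  have hg1c : Continuous fun p : ℝ × ℝ => g1 p.1 p.2 :=
    (hA.continuous.comp hzc).clm_apply hv1
  have hg2c : Continuous fun p : ℝ × ℝ => g2 p.1 p.2 :=
    (((hA2.continuous.comp hzc).clm_apply hv1).clm_apply hv1).add
      ((hA.continuous.comp hzc).clm_apply hv2)
  -- pointwise derivatives in h
  have hzd : ∀ (h t : ℝ),
      HasDerivAt (fun h => (1 - t) • y + t • Y h) (t • deriv Y h) h := fun h t =>
    (((hY.differentiable (by simp) h).hasDerivAt).const_smul t).const_add _
  have hgd : ∀ h t, HasDerivAt (fun x => g x t) (g1 h t) h := fun h t =>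
    ((hF.differentiable (by simp) _).hasFDerivAt).comp_hasDerivAt h (hzd h t)
  have hg1d : ∀ h t, HasDerivAt (fun x => g1 x t) (g2 h t) h := by
    intro h t
    have hc : HasDerivAt (fun x => A ((1 - t) • y + t • Y x))
        (A2 ((1 - t) • y + t • Y h) (t • deriv Y h)) h :=
      ((hA.differentiable (by simp) _).hasFDerivAt).comp_hasDerivAt h (hzd h t)
    have hu : HasDerivAt (fun x => t • deriv Y x) (t • deriv (deriv Y) h) h :=
      ((hY1.differentiable (by simp) h).hasDerivAt).const_smul t
    exact hc.clm_apply hu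
  have hGd : ∀ h, HasDerivAt G (G1 h) h := fun h => avf_param_deriv hgc hg1c hgd h
  have hG1d : ∀ h, HasDerivAt G1 (G2 h) h := fun h => avf_param_deriv hg1c hg2c hg1d h
  have hG2c : Continuous G2 :=
    intervalIntegral.continuous_parametric_intervalIntegral_of_continuous' (f := g2) hg2c 0 1
  -- scheme in terms of G
  have hse : ∀ᶠ h in 𝓝 (0:ℝ), Y h = y + h • G h := by
    filter_upwards [hscheme] with h hh
    rw [hh]
  -- base point values
  have hY0 : Y 0 = y := by
    have h := hse.self_of_nhds
    simpa using h
  have key0 : ∀ t : ℝ, (1 - t) • y + t • Y 0 = y := fun t => by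
    rw [hY0, ← add_smul, sub_add_cancel, one_smul]
  have hG0 : G 0 = F y := by
    have : G 0 = ∫ t in (0:ℝ)..1, F y := by
      refine intervalIntegral.integral_congr fun t _ => ?_
      simp only [hg_def, key0 t]
    rw [this, intervalIntegral.integral_const]
    simp
  -- first derivative
  have hY1e : ∀ᶠ h in 𝓝 (0:ℝ), deriv Y h = G h + h • G1 h := by
    filter_upwards [hse.eventually_nhds] with h hh
    have h1 : HasDerivAt (fun x => y + x • G x) (G h + h • G1 h) h :=
      (avf_id_smul (hGd h)).const_add y
    have hh' : Y =ᶠ[𝓝 h] fun x => y + x • G x := hh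
    rw [Filter.EventuallyEq.deriv_eq hh', h1.deriv]
  have hd1_0 : deriv Y 0 = F y := by
    have h := hY1e.self_of_nhds
    rw [h, hG0]
    simp
  -- second derivative
  have hG1_0 : G1 0 = (2⁻¹ : ℝ) • (A y (F y)) := by
    have hpt : ∀ t : ℝ, g1 0 t = t • A y (F y) := fun t => by
      simp only [hg1_def, key0 t, hd1_0, ContinuousLinearMap.map_smul]
    calc G1 0 = ∫ t in (0:ℝ)..1, t • A y (F y) :=
        intervalIntegral.integral_congr fun t _ => hpt t
      _ = (∫ t in (0:ℝ)..1, t) • A y (F y) := intervalIntegral.integral_smul_const _ _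
      _ = (2⁻¹ : ℝ) • (A y (F y)) := by
          have h1 : (∫ t in (0:ℝ)..1, t) = 2⁻¹ := by rw [integral_id]; norm_num
          rw [h1]
  have hY2e : ∀ᶠ h in 𝓝 (0:ℝ), deriv (deriv Y) h = G1 h + (G1 h + h • G2 h) := by
    filter_upwards [hY1e.eventually_nhds] with h hh
    have h1 : HasDerivAt (fun x => G x + x • G1 x) (G1 h + (G1 h + h • G2 h)) h :=
      (hGd h).add (avf_id_smul (hG1d h))
    have hh' : deriv Y =ᶠ[𝓝 h] fun x => G x + x • G1 x := hh
    rw [Filter.EventuallyEq.deriv_eq hh', h1.deriv]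
  have hd2_0 : deriv (deriv Y) 0 = A y (F y) := by
    have h := hY2e.self_of_nhds
    rw [h, hG1_0, zero_smul, add_zero, ← add_smul]
    norm_num
  -- third derivative
  have hG2_0 : G2 0 = (3⁻¹ : ℝ) • (A2 y (F y) (F y)) + (2⁻¹ : ℝ) • (A y (A y (F y))) := by
    have hpt : ∀ t : ℝ,
        g2 0 t = (t ^ 2) • (A2 y (F y) (F y)) + t • (A y (A y (F y))) := fun t => by
      simp only [hg2_def, key0 t, hd1_0, hd2_0, ContinuousLinearMap.map_smul,
        ContinuousLinearMap.smul_apply, smul_smul]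
      module
    calc G2 0 = ∫ t in (0:ℝ)..1,
          ((t ^ 2) • (A2 y (F y) (F y)) + t • (A y (A y (F y)))) :=
        intervalIntegral.integral_congr fun t _ => hpt t
      _ = (∫ t in (0:ℝ)..1, (t ^ 2) • (A2 y (F y) (F y)))
          + ∫ t in (0:ℝ)..1, t • (A y (A y (F y))) := by
        refine intervalIntegral.integral_add ?_ ?_
        · exact ((continuous_pow 2).smul continuous_const).intervalIntegrable 0 1
        · exact (continuous_id.smul continuous_const).intervalIntegrable 0 1
      _ = (∫ t in (0:ℝ)..1, t ^ 2) • (A2 y (F y) (F y))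
          + (∫ t in (0:ℝ)..1, t) • (A y (A y (F y))) := by
        rw [intervalIntegral.integral_smul_const, intervalIntegral.integral_smul_const]
      _ = (3⁻¹ : ℝ) • (A2 y (F y) (F y)) + (2⁻¹ : ℝ) • (A y (A y (F y))) := by
        have h1 : (∫ t in (0:ℝ)..1, t) = 2⁻¹ := by rw [integral_id]; norm_num
        have h2 : (∫ t in (0:ℝ)..1, t ^ 2) = 3⁻¹ := by rw [integral_pow]; norm_num
        rw [h1, h2]
  have hY3 : deriv (deriv (deriv Y)) 0 = G2 0 + (G2 0 + G2 0) := by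
    have h1 : HasDerivAt (fun x => G1 x + (G1 x + x • G2 x)) (G2 0 + (G2 0 + G2 0)) 0 :=
      (hG1d 0).add ((hG1d 0).add (avf_smul_hasDerivAt hG2c.continuousAt))
    have hh' : deriv (deriv Y) =ᶠ[𝓝 (0:ℝ)] fun x => G1 x + (G1 x + x • G2 x) := hY2e
    rw [Filter.EventuallyEq.deriv_eq hh', h1.deriv]
  -- assemble
  refine ⟨hY0, hd1_0, ?_, ?_⟩
  · show deriv (deriv Y) 0 = A y (F y)
    exact hd2_0
  · show deriv (deriv (deriv Y)) 0 = _
    rw [hY3, hG2_0, iteratedFDeriv_two_apply]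
    rw [← hA_def, ← hA2_def]
    simp only [Matrix.cons_val_zero, Matrix.cons_val_one, Matrix.head_cons]
    module
end
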